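/- arXiv:2205.09189 — 5 statements merged into one kernel-verified Lean document; each statement's English description precedes it below -/
import Mathlib

section
/- Let f : [0,∞) → [0,∞) be continuous, submultiplicative, with f(x) > 0 for all x > 0 and lim_{x→0} f(x)/x² = 0. If (x_n) ⊆ [0,∞) is a sequence with lim_{n→∞} f(x_n) = 0, then lim_{n→∞} x_n = 0. -/
open Filter Topology

/-- Let `f : [0,∞) → [0,∞)` be continuous, submultiplicative, positive on
`(0,∞)` and with `f(x)/x² → 0` as `x → 0`.  If `(x_n) ⊆ [0,∞)` satisfies `f(x_n) → 0`, then
`x_n → 0`. -/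
theorem statement_4 (f : ℝ → ℝ)
    (hcont : ContinuousOn f (Set.Ici 0))
    (hnonneg : ∀ x : ℝ, 0 ≤ x → 0 ≤ f x)
    (hsub : ∀ x y : ℝ, 0 ≤ x → 0 ≤ y → f (x * y) ≤ f x * f y)
    (hpos : ∀ x : ℝ, 0 < x → 0 < f x)
    (hlim : Tendsto (fun x => f x / x ^ 2) (𝓝[>] (0 : ℝ)) (𝓝 0))
    (x : ℕ → ℝ) (hx : ∀ n, 0 ≤ x n)
    (hfx : Tendsto (fun n => f (x n)) atTop (𝓝 0)) :
    Tendsto x atTop (𝓝 0) := by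
  -- f 1 ≥ 1
  have hf1 : 1 ≤ f 1 := by
    have h := hsub 1 1 zero_le_one zero_le_one
    rw [mul_one] at h
    nlinarith [hpos 1 one_pos]
  -- small t : f t < t ^ 2
  have h1 : ∀ᶠ t in 𝓝[>] (0:ℝ), f t / t ^ 2 < 1 :=
    hlim.eventually (gt_mem_nhds one_pos)
  rw [Filter.Eventually, Metric.mem_nhdsWithin_iff] at h1
  obtain ⟨δ, hδpos, hδ⟩ := h1
  have hsmall : ∀ t : ℝ, 0 < t → t < δ → f t < t ^ 2 := by
    intro t ht htδ
    have hd : t ∈ Metric.ball (0:ℝ) δ ∩ Set.Ioi 0 := by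
      constructor
      · rw [Metric.mem_ball, Real.dist_eq, sub_zero, abs_of_pos ht]; exact htδ
      · exact ht
    have h2 : f t / t ^ 2 < 1 := hδ hd
    have ht2 : (0:ℝ) < t ^ 2 := by positivity
    have := (div_lt_one ht2).mp h2
    linarith
  rw [Metric.tendsto_atTop]
  intro ε hε
  set B := max (2 / δ) (max ε 1) with hBdef
  have hεB : ε ≤ B := le_trans (le_max_left _ _) (le_max_right _ _)
  have h1B : (1:ℝ) ≤ B := le_trans (le_max_right _ _) (le_max_right _ _)
  -- large x : f x > 1
  have hlarge : ∀ y : ℝ, B < y → 1 < f y := by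
    intro y hy
    have hy1 : (1:ℝ) < y := lt_of_le_of_lt h1B hy
    have hy0 : (0:ℝ) < y := lt_trans one_pos hy1
    have hinvpos : 0 < 1 / y := by positivity
    have hinvδ : 1 / y < δ := by
      have h2δ : 2 / δ < y := lt_of_le_of_lt (le_max_left _ _) hy
      rw [div_lt_iff₀ hy0]
      rw [div_lt_iff₀ hδpos] at h2δ
      nlinarith
    have hfs : f (1 / y) < (1 / y) ^ 2 := hsmall _ hinvpos hinvδ
    have hmul : f 1 ≤ f y * f (1 / y) := by
      have := hsub y (1 / y) hy0.le hinvpos.le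
      rwa [mul_one_div_cancel hy0.ne'] at this
    have hfy : 0 < f y := hpos y hy0
    have hfinv : 0 < f (1 / y) := hpos _ hinvpos
    -- f y ≥ 1 / f(1/y) > y^2 ≥ 1
    have hge : 1 ≤ f y * f (1 / y) := le_trans hf1 hmul
    have hsq : (1 / y) ^ 2 = 1 / y ^ 2 := by field_simp
    by_contra hcon'
    push_neg at hcon'
    have h3 : f y * f (1 / y) ≤ f (1 / y) := mul_le_of_le_one_left hfinv.le hcon'
    have h4 : 1 / y ^ 2 < 1 := by
      rw [div_lt_one (by positivity)]; nlinarith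
    rw [hsq] at hfs
    linarith
  -- min of f on [ε, B]
  have hK : IsCompact (Set.Icc ε B) := isCompact_Icc
  have hKsub : Set.Icc ε B ⊆ Set.Ici (0:ℝ) := fun t ht => le_trans hε.le ht.1
  obtain ⟨a, haK, ha⟩ := hK.exists_isMinOn ⟨ε, le_refl ε, hεB⟩ (hcont.mono hKsub)
  have hc : 0 < f a := hpos a (lt_of_lt_of_le hε haK.1)
  set c := min (f a) 1 with hcdef
  have hcpos : 0 < c := lt_min hc one_pos
  have hev : ∀ᶠ n in atTop, f (x n) < c := by
    have := hfx.eventually (gt_mem_nhds hcpos)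
    exact this
  rw [eventually_atTop] at hev
  obtain ⟨N, hN⟩ := hev
  refine ⟨N, fun n hn => ?_⟩
  have hfn := hN n hn
  rw [Real.dist_eq, sub_zero, abs_of_nonneg (hx n)]
  by_contra hcon
  push_neg at hcon
  rcases le_or_gt (x n) B with hB | hB
  · have := ha ⟨hcon, hB⟩
    have : f a ≤ f (x n) := this
    have : c ≤ f (x n) := le_trans (min_le_left _ _) this
    linarith
  · have := hlarge (x n) hB
    have : c ≤ 1 := min_le_right _ _
    linarith
end

section
/- Let X and Y be normed spaces, Z a reflexive Banach space, and κ_X : Z → X and κ_Y : Z → Y compact linear maps such that κ_X z = 0 implies κ_Y z = 0 for all z ∈ Z. Let f : [0,∞) → [0,∞) be continuous, submultiplicative, with f(x) > 0 for all x > 0 and lim_{x→0} f(x)/x² = 0. Then sup_{z ∈ Z} [ −f(‖κ_X z‖_X) + ‖κ_Y z‖_Y² − ½‖z‖_Z² ] < ∞. -/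
open Filter Topology

/-! If `‖κY z‖² ≤ ½‖z‖²` the expression is nonpositive, so only `z` with `‖κY z‖ ≥ ½‖z‖` matter.
For those, `‖κX z‖ ≥ δ‖z‖` for some `δ > 0`: otherwise an ultrafilter on the part of the unit
ball where `‖κX‖` is small has a weak limit `w` (the ball is weakly compact by reflexivity), and
compact operators carry weak limits of bounded ultrafilters to norm limits, so `κX w = 0` while
`‖κY w‖ ≥ ½`. Submultiplicativity, in the form `f 1 ≤ f t * f t⁻¹`, turns `f x = o(x²)` at `0`
into `f t / t² → ∞` at `∞`, so `f ‖κX z‖ ≥ ‖κY‖² ‖z‖² ≥ ‖κY z‖²` once `‖κX z‖` is large, and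
the expression is bounded by `‖κY z‖²` on the remaining bounded set of `z`. -/

open Metric

section CompactOperator

variable {𝕜 Z X : Type*} [RCLike 𝕜] [NormedAddCommGroup Z] [NormedSpace 𝕜 Z]
  [NormedAddCommGroup X] [NormedSpace 𝕜 X]

theorem exists_tendsto_toWeakSpace_of_closedBall_mem
    (hrefl : Function.Surjective (NormedSpace.inclusionInDoubleDual 𝕜 Z))
    (U : Ultrafilter Z) {r : ℝ} (hU : closedBall (0 : Z) r ∈ U) :
    ∃ w, Tendsto (toWeakSpace 𝕜 Z) U (𝓝 (toWeakSpace 𝕜 Z w)) := by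
  have hcompact : IsCompact (closure (toWeakSpace 𝕜 Z '' closedBall 0 r)) := by
    refine NormedSpace.isCompact_closure_of_isBounded 𝕜 Z _ ?_ fun φ _ => ?_
    · rw [Set.preimage_image_eq _ (toWeakSpace 𝕜 Z).injective]
      exact isBounded_closedBall
    · obtain ⟨w, hw⟩ := hrefl (WeakDual.toStrongDual φ)
      refine ⟨toWeakSpace 𝕜 Z w, WeakDual.toStrongDual.injective ?_⟩
      ext ψ
      exact DFunLike.congr_fun hw ψ
  obtain ⟨x, -, hx⟩ := hcompact.ultrafilter_le_nhds (U.map (toWeakSpace 𝕜 Z)) <| by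
    rw [Ultrafilter.coe_map, le_principal_iff]
    exact mem_of_superset hU fun z hz => subset_closure ⟨z, hz, rfl⟩
  exact ⟨(toWeakSpace 𝕜 Z).symm x, by rwa [LinearEquiv.apply_symm_apply]⟩

theorem IsCompactOperator.tendsto_of_tendsto_toWeakSpace {T : Z →L[𝕜] X}
    (hT : IsCompactOperator T) {U : Ultrafilter Z} {r : ℝ} (hU : closedBall (0 : Z) r ∈ U)
    {w : Z} (hw : Tendsto (toWeakSpace 𝕜 Z) U (𝓝 (toWeakSpace 𝕜 Z w))) :
    Tendsto T U (𝓝 (T w)) := by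
  obtain ⟨K, hK, hTK⟩ := hT.image_closedBall_subset_compact r
  obtain ⟨x, -, hx⟩ := hK.ultrafilter_le_nhds (U.map T) <| by
    rw [Ultrafilter.coe_map, le_principal_iff]
    exact mem_map.2 <| mem_of_superset hU fun z hz => hTK ⟨z, hz, rfl⟩
  have hweak : Tendsto (toWeakSpace 𝕜 X ∘ T) U (𝓝 (toWeakSpace 𝕜 X (T w))) :=
    ((WeakSpace.map T).continuous.tendsto _).comp hw
  have hnorm : Tendsto (toWeakSpace 𝕜 X ∘ T) U (𝓝 (toWeakSpace 𝕜 X x)) :=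
    ((toWeakSpaceCLM 𝕜 X).continuous.tendsto x).comp hx
  rwa [(toWeakSpace 𝕜 X).injective (tendsto_nhds_unique hnorm hweak)] at hx

variable {Y : Type*} [NormedAddCommGroup Y] [NormedSpace 𝕜 Y]

theorem exists_le_norm_apply_of_ker_le
    (hrefl : Function.Surjective (NormedSpace.inclusionInDoubleDual 𝕜 Z))
    {A : Z →L[𝕜] X} {B : Z →L[𝕜] Y} (hA : IsCompactOperator A) (hB : IsCompactOperator B)
    (hker : ∀ z, A z = 0 → B z = 0) {c : ℝ} (hc : 0 < c) :
    ∃ δ > 0, ∀ w : Z, ‖w‖ ≤ 1 → c ≤ ‖B w‖ → δ ≤ ‖A w‖ := by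
  by_contra! h
  set S := {w : Z | ‖w‖ ≤ 1 ∧ c ≤ ‖B w‖}
  set F := comap (fun w => ‖A w‖) (𝓝 0) ⊓ 𝓟 S
  have : F.NeBot := ((nhds_basis_ball.comap _).inf_principal S).neBot_iff.2 fun hε => by
    obtain ⟨w, hw1, hwc, hwε⟩ := h _ hε
    exact ⟨w, by simpa using hwε, hw1, hwc⟩
  set U := Ultrafilter.of F
  have hUS : S ∈ U := Ultrafilter.of_le F (mem_inf_of_right (mem_principal_self S))
  have hball : closedBall (0 : Z) 1 ∈ U :=
    mem_of_superset hUS fun w hw => mem_closedBall_zero_iff.2 hw.1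
  obtain ⟨w, hw⟩ := exists_tendsto_toWeakSpace_of_closedBall_mem hrefl U hball
  have hAw : A w = 0 :=
    tendsto_nhds_unique (hA.tendsto_of_tendsto_toWeakSpace hball hw) <|
      tendsto_zero_iff_norm_tendsto_zero.2 <|
        (tendsto_comap.mono_left inf_le_left).mono_left (Ultrafilter.of_le F)
  have hBw : c ≤ ‖B w‖ :=
    ge_of_tendsto (hB.tendsto_of_tendsto_toWeakSpace hball hw).norm
      (mem_of_superset hUS fun _ hw => hw.2)
  exact hc.not_ge (by simpa [hker w hAw] using hBw)

theorem exists_mul_norm_le_norm_apply_of_ker_le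
    (hrefl : Function.Surjective (NormedSpace.inclusionInDoubleDual 𝕜 Z))
    {A : Z →L[𝕜] X} {B : Z →L[𝕜] Y} (hA : IsCompactOperator A) (hB : IsCompactOperator B)
    (hker : ∀ z, A z = 0 → B z = 0) {c : ℝ} (hc : 0 < c) :
    ∃ δ > 0, ∀ z : Z, c * ‖z‖ ≤ ‖B z‖ → δ * ‖z‖ ≤ ‖A z‖ := by
  obtain ⟨δ, hδ, h⟩ := exists_le_norm_apply_of_ker_le hrefl hA hB hker hc
  refine ⟨δ, hδ, fun z hz => ?_⟩
  rcases eq_or_ne z 0 with rfl | hz0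
  · simp
  have hn : 0 < ‖z‖ := norm_pos_iff.2 hz0
  have hu := h ((‖z‖ : 𝕜)⁻¹ • z) (by simp [norm_smul, hn.ne'])
    (by simpa [norm_smul, inv_mul_eq_div, le_div_iff₀ hn] using hz)
  simpa [norm_smul, inv_mul_eq_div, le_div_iff₀ hn] using hu

end CompactOperator

theorem tendsto_div_sq_atTop_of_submultiplicative {f : ℝ → ℝ}
    (hsub : ∀ x y : ℝ, 0 ≤ x → 0 ≤ y → f (x * y) ≤ f x * f y)
    (hpos : ∀ x : ℝ, 0 < x → 0 < f x)
    (hlim : Tendsto (fun x => f x / x ^ 2) (𝓝[>] (0 : ℝ)) (𝓝 0)) :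
    Tendsto (fun t => f t / t ^ 2) atTop atTop := by
  set g := fun t : ℝ => f t⁻¹ / t⁻¹ ^ 2
  have hgpos : ∀ t > 0, 0 < g t := fun t ht => div_pos (hpos _ (inv_pos.2 ht)) (by positivity)
  have hg : Tendsto g atTop (𝓝[>] 0) :=
    tendsto_nhdsWithin_iff.2 ⟨hlim.comp tendsto_inv_atTop_nhdsGT_zero,
      (eventually_gt_atTop 0).mono hgpos⟩
  refine tendsto_atTop_mono' _ ?_ (hg.inv_tendsto_nhdsGT_zero.const_mul_atTop (hpos 1 one_pos))
  filter_upwards [eventually_gt_atTop 0] with t ht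
  have h1 : f 1 ≤ f t / t ^ 2 * g t :=
    calc f 1 = f (t * t⁻¹) := by rw [mul_inv_cancel₀ ht.ne']
    _ ≤ f t * f t⁻¹ := hsub _ _ ht.le (inv_nonneg.2 ht.le)
    _ = f t / t ^ 2 * g t := by simp only [g]; field_simp
  simpa [div_eq_mul_inv] using (div_le_iff₀ (hgpos t ht)).2 h1

theorem exists_forall_ge_mul_sq_le_of_submultiplicative {f : ℝ → ℝ}
    (hsub : ∀ x y : ℝ, 0 ≤ x → 0 ≤ y → f (x * y) ≤ f x * f y)
    (hpos : ∀ x : ℝ, 0 < x → 0 < f x)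
    (hlim : Tendsto (fun x => f x / x ^ 2) (𝓝[>] (0 : ℝ)) (𝓝 0)) (K : ℝ) :
    ∃ T, ∀ t ≥ T, K * t ^ 2 ≤ f t := by
  obtain ⟨T, hT⟩ := eventually_atTop.1 <|
    ((tendsto_div_sq_atTop_of_submultiplicative hsub hpos hlim).eventually_ge_atTop K).and
      (eventually_gt_atTop 0)
  exact ⟨T, fun t ht => (le_div_iff₀ (pow_pos (hT t ht).2 2)).1 (hT t ht).1⟩

theorem statement_5_general {X Y Z : Type}
    [NormedAddCommGroup X] [NormedSpace ℝ X]
    [NormedAddCommGroup Y] [NormedSpace ℝ Y]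
    [NormedAddCommGroup Z] [NormedSpace ℝ Z]
    (hrefl : Function.Surjective (NormedSpace.inclusionInDoubleDual ℝ Z))
    (κX : Z →ₗ[ℝ] X) (κY : Z →ₗ[ℝ] Y)
    (hκX : IsCompactOperator (⇑κX)) (hκY : IsCompactOperator (⇑κY))
    (hker : ∀ z : Z, κX z = 0 → κY z = 0)
    (f : ℝ → ℝ)
    (hnonneg : ∀ x : ℝ, 0 ≤ x → 0 ≤ f x)
    (hsub : ∀ x y : ℝ, 0 ≤ x → 0 ≤ y → f (x * y) ≤ f x * f y)
    (hpos : ∀ x : ℝ, 0 < x → 0 < f x)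
    (hlim : Tendsto (fun x => f x / x ^ 2) (𝓝[>] (0 : ℝ)) (𝓝 0)) :
    BddAbove (Set.range fun z : Z => -f ‖κX z‖ + ‖κY z‖ ^ 2 - ‖z‖ ^ 2 / 2) := by
  set A : Z →L[ℝ] X := ⟨κX, hκX.continuous⟩
  set B : Z →L[ℝ] Y := ⟨κY, hκY.continuous⟩
  obtain ⟨δ, hδ, hAB⟩ :=
    exists_mul_norm_le_norm_apply_of_ker_le hrefl (A := A) (B := B) hκX hκY hker one_half_pos
  obtain ⟨T, hT⟩ :=
    exists_forall_ge_mul_sq_le_of_submultiplicative hsub hpos hlim (‖B‖ ^ 2 / δ ^ 2)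
  refine ⟨(‖B‖ * T / δ) ^ 2, ?_⟩
  rintro _ ⟨z, rfl⟩
  have hfz := hnonneg _ (norm_nonneg (κX z))
  have hBz : ‖κY z‖ ≤ ‖B‖ * ‖z‖ := B.le_opNorm z
  rcases le_or_gt ‖κY z‖ (‖z‖ / 2) with hsmall | hlarge
  · nlinarith [norm_nonneg (κY z), sq_nonneg (‖B‖ * T / δ)]
  have hAz : δ * ‖z‖ ≤ ‖κX z‖ := hAB z (by linarith : 1 / 2 * ‖z‖ ≤ ‖κY z‖)
  rcases le_or_gt T ‖κX z‖ with hbig | hbounded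
  · have : ‖B‖ ^ 2 * ‖z‖ ^ 2 ≤ f ‖κX z‖ :=
      calc ‖B‖ ^ 2 * ‖z‖ ^ 2 = ‖B‖ ^ 2 / δ ^ 2 * (δ * ‖z‖) ^ 2 := by field_simp
        _ ≤ ‖B‖ ^ 2 / δ ^ 2 * ‖κX z‖ ^ 2 := by gcongr
        _ ≤ f ‖κX z‖ := hT _ hbig
    nlinarith [norm_nonneg (κY z), sq_nonneg (‖B‖ * T / δ)]
  · have hzT : ‖z‖ ≤ T / δ := by rw [le_div_iff₀ hδ]; linarith
    have : ‖κY z‖ ≤ ‖B‖ * T / δ := by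
      rw [mul_div_assoc]; exact hBz.trans (mul_le_mul_of_nonneg_left hzT (norm_nonneg _))
    nlinarith [norm_nonneg (κY z)]

/-- Let `X`, `Y` be normed spaces, `Z` a reflexive Banach space, and
`κX : Z → X`, `κY : Z → Y` compact linear maps such that `κX z = 0` implies `κY z = 0`.
Let `f : [0,∞) → [0,∞)` be continuous, submultiplicative, positive on `(0,∞)`, with
`f(x)/x² → 0` as `x → 0`.  Then `sup_z [−f(‖κX z‖) + ‖κY z‖² − ½‖z‖²] < ∞`. -/
theorem statement_5 {X Y Z : Type}
    [NormedAddCommGroup X] [NormedSpace ℝ X]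
    [NormedAddCommGroup Y] [NormedSpace ℝ Y]
    [NormedAddCommGroup Z] [NormedSpace ℝ Z] [CompleteSpace Z]
    (hrefl : Function.Surjective (NormedSpace.inclusionInDoubleDual ℝ Z))
    (κX : Z →ₗ[ℝ] X) (κY : Z →ₗ[ℝ] Y)
    (hκX : IsCompactOperator (⇑κX)) (hκY : IsCompactOperator (⇑κY))
    (hker : ∀ z : Z, κX z = 0 → κY z = 0)
    (f : ℝ → ℝ)
    (hcont : ContinuousOn f (Set.Ici 0))
    (hnonneg : ∀ x : ℝ, 0 ≤ x → 0 ≤ f x)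
    (hsub : ∀ x y : ℝ, 0 ≤ x → 0 ≤ y → f (x * y) ≤ f x * f y)
    (hpos : ∀ x : ℝ, 0 < x → 0 < f x)
    (hlim : Tendsto (fun x => f x / x ^ 2) (𝓝[>] (0 : ℝ)) (𝓝 0)) :
    BddAbove (Set.range fun z : Z => -f ‖κX z‖ + ‖κY z‖ ^ 2 - ‖z‖ ^ 2 / 2) :=
  statement_5_general hrefl κX κY hκX hκY hker f hnonneg hsub hpos hlim
end

section
/- Every absolutely 2-summing operator L : H → B from a separable Hilbert space H to a Banach space B is absolutely 1-summing. -/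
open Filter Topology
open scoped RealInnerProductSpace

/-- A measure on a topological vector space is a *centred Gaussian measure* if the pushforward
under every continuous linear functional is a centred Gaussian measure on `ℝ`. -/
def IsCentredGaussian {X : Type*} [TopologicalSpace X] [AddCommGroup X] [Module ℝ X]
    [MeasurableSpace X] (μ : MeasureTheory.Measure X) : Prop :=
  ∀ φ : X →L[ℝ] ℝ, ∃ v : NNReal, μ.map φ = ProbabilityTheory.gaussianReal 0 v

/-- `(Y, ι)` is a Banach completion of `X` with respect to the seminorm `p`:
`ι` is isometric for `p` and has dense range.  (Completeness of `Y` is an instance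
assumption at use sites.) -/
structure IsBanachCompletion {X : Type*} [AddCommGroup X] [Module ℝ X]
    {Y : Type*} [NormedAddCommGroup Y] [NormedSpace ℝ Y]
    (p : Seminorm ℝ X) (ι : X →ₗ[ℝ] Y) : Prop where
  norm_map : ∀ x, ‖ι x‖ = p x
  dense_range : DenseRange ι

/-- A linear operator between normed spaces is *absolutely `r`-summing*. -/
def AbsolutelySumming {E F : Type*} [NormedAddCommGroup E] [NormedSpace ℝ E]
    [NormedAddCommGroup F] [NormedSpace ℝ F] (r : ℝ) (T : E →ₗ[ℝ] F) : Prop :=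
  ∃ C : ℝ, 0 < C ∧ ∀ (k : ℕ) (x : Fin k → E),
    (∑ n, ‖T (x n)‖ ^ r) ^ (1 / r) ≤
      C * ⨆ φ : {ψ : E →L[ℝ] ℝ // ‖ψ‖ ≤ 1}, (∑ n, |φ.1 (x n)| ^ r) ^ (1 / r)

/-- A map between inner product spaces is *Hilbert–Schmidt* if the squared norms of the images
of some Hilbert basis are summable. -/
def IsHilbertSchmidtMap {H J : Type*} [NormedAddCommGroup H] [InnerProductSpace ℝ H]
    [NormedAddCommGroup J] [InnerProductSpace ℝ J] (L : H → J) : Prop :=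
  ∃ (ι : Type) (b : HilbertBasis ι ℝ H), Summable fun i => ‖L (b i)‖ ^ 2

/-- `(H, ι)` is (a realization of) the Cameron–Martin space of the measure `μ`:
`ι` is a continuous linear injection whose range is the set of vectors of finite
Cameron–Martin norm, and the Hilbert norm of `H` is the Cameron–Martin norm. -/
structure IsCameronMartin {X : Type*} [TopologicalSpace X] [AddCommGroup X] [Module ℝ X]
    [MeasurableSpace X] {H : Type*} [NormedAddCommGroup H] [InnerProductSpace ℝ H]
    (μ : MeasureTheory.Measure X) (ι : H →ₗ[ℝ] X) : Prop where
  continuous : Continuous ι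
  injective : Function.Injective ι
  norm_eq : ∀ h : H,
    ‖h‖ = sSup {c : ℝ | ∃ φ : X →L[ℝ] ℝ, (∫ y, (φ y) ^ 2 ∂μ) ≤ 1 ∧ c = φ (ι h)}
  range_eq : Set.range ι =
    {x : X | ∃ M : ℝ, ∀ φ : X →L[ℝ] ℝ, (∫ y, (φ y) ^ 2 ∂μ) ≤ 1 → φ x ≤ M}

/-- A seminorm is a *Hilbert seminorm* if it is induced by a positive semidefinite symmetric
bilinear form. -/
def IsHilbertSeminorm {X : Type*} [AddCommGroup X] [Module ℝ X] (p : Seminorm ℝ X) : Prop :=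
  ∃ B : X →ₗ[ℝ] X →ₗ[ℝ] ℝ, (∀ x y, B x y = B y x) ∧ (∀ x, 0 ≤ B x x) ∧
    ∀ x, p x = Real.sqrt (B x x)

/-- A continuous linear map between normed spaces is *nuclear*. -/
def IsNuclearMap {E F : Type*} [NormedAddCommGroup E] [NormedSpace ℝ E]
    [NormedAddCommGroup F] [NormedSpace ℝ F] (T : E →L[ℝ] F) : Prop :=
  ∃ (φ : ℕ → E →L[ℝ] ℝ) (y : ℕ → F),
    Summable (fun n => ‖φ n‖ * ‖y n‖) ∧ ∀ x, HasSum (fun n => φ n x • y n) (T x)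

/-- A locally convex space is *nuclear* if for every continuous Hilbert seminorm `p` there is a
continuous Hilbert seminorm `r ≥ p` such that the natural map `X_r → X_p` between the Banach
completions is nuclear. -/
def IsNuclearSpace (X : Type*) [AddCommGroup X] [Module ℝ X] [TopologicalSpace X] : Prop :=
  ∀ p : Seminorm ℝ X, Continuous p → IsHilbertSeminorm p →
    ∃ r : Seminorm ℝ X, Continuous r ∧ IsHilbertSeminorm r ∧ p ≤ r ∧
      ∀ (Xr Xp : Type) [NormedAddCommGroup Xr] [NormedSpace ℝ Xr] [CompleteSpace Xr]
        [NormedAddCommGroup Xp] [NormedSpace ℝ Xp] [CompleteSpace Xp]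
        (ιr : X →ₗ[ℝ] Xr) (ιp : X →ₗ[ℝ] Xp), IsBanachCompletion r ιr →
          IsBanachCompletion p ιp →
          ∀ T : Xr →L[ℝ] Xp, (∀ x, T (ιr x) = ιp x) → IsNuclearMap T

/-!
Fix `x₁, …, x_k ∈ H` with `∑ₙ |φ xₙ| ≤ W` for every functional of norm at most one, and let
`K ⊆ ℝᵏ` be the closed convex hull of the profiles `(⟪v, xₙ⟫²)ₙ`, `‖v‖ ≤ 1`. Averaging over
Rademacher signs, Khintchine's inequality gives `∑ₙ √cₙ ≤ √3 W` on `K`. Maximising the concave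
function `∑ₙ √(cₙ + δ)` over the compact convex set `K` produces weights `sₙ = √(c₀ₙ + δ)` with
`∑ₙ cₙ / sₙ ≤ ∑ₙ sₙ` on `K`, a finite form of Pietsch domination. The 2-summing inequality applied
to `xₙ / √sₙ`, followed by Cauchy–Schwarz, gives `∑ₙ ‖L xₙ‖ ≤ C ∑ₙ sₙ ≤ C (√3 W + k √δ)`, and
`δ → 0` finishes the proof.
-/

open Finset

theorem absolutelySumming_iff {E F : Type*} [NormedAddCommGroup E] [NormedSpace ℝ E]
    [NormedAddCommGroup F] [NormedSpace ℝ F] {p : ℝ} (hp : 0 < p) (T : E →ₗ[ℝ] F) :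
    AbsolutelySumming p T ↔ ∃ C : ℝ, 0 < C ∧ ∀ (k : ℕ) (x : Fin k → E) (M : ℝ),
      (∀ φ : E →L[ℝ] ℝ, ‖φ‖ ≤ 1 → ∑ n, |φ (x n)| ^ p ≤ M) →
        ∑ n, ‖T (x n)‖ ^ p ≤ C ^ p * M := by
  have hunit : Nonempty {φ : E →L[ℝ] ℝ // ‖φ‖ ≤ 1} := ⟨⟨0, by simp⟩⟩
  have hroot {a b : ℝ} (ha : 0 ≤ a) (hb : 0 ≤ b) : a ^ (1 / p) ≤ b ↔ a ≤ b ^ p := by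
    rw [← Real.rpow_le_rpow_iff (by positivity) hb hp, ← Real.rpow_mul ha,
      one_div_mul_cancel hp.ne', Real.rpow_one]
  constructor
  · rintro ⟨C, hC, hT⟩
    refine ⟨C, hC, fun k x M hM => ?_⟩
    have hM₀ : 0 ≤ M := by simpa [Real.zero_rpow hp.ne'] using hM 0 (by simp)
    have hsup : ⨆ φ : {φ : E →L[ℝ] ℝ // ‖φ‖ ≤ 1}, (∑ n, |φ.1 (x n)| ^ p) ^ (1 / p) ≤
        M ^ (1 / p) :=
      ciSup_le fun φ => Real.rpow_le_rpow (by positivity) (hM φ.1 φ.2) (by positivity)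
    have hCM : C ^ p * M = (C * M ^ (1 / p)) ^ p := by
      rw [Real.mul_rpow hC.le (by positivity), ← Real.rpow_mul hM₀, one_div_mul_cancel hp.ne',
        Real.rpow_one]
    rw [hCM, ← hroot (by positivity) (by positivity)]
    exact (hT k x).trans (mul_le_mul_of_nonneg_left hsup hC.le)
  · rintro ⟨C, hC, hT⟩
    refine ⟨C, hC, fun k x => ?_⟩
    set S := ⨆ φ : {φ : E →L[ℝ] ℝ // ‖φ‖ ≤ 1}, (∑ n, |φ.1 (x n)| ^ p) ^ (1 / p)
    have hbdd : BddAbove (Set.range fun φ : {φ : E →L[ℝ] ℝ // ‖φ‖ ≤ 1} =>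
        (∑ n, |φ.1 (x n)| ^ p) ^ (1 / p)) := by
      refine ⟨(∑ n, ‖x n‖ ^ p) ^ (1 / p), ?_⟩
      rintro _ ⟨φ, rfl⟩
      refine Real.rpow_le_rpow (by positivity) (sum_le_sum fun n _ => ?_) (by positivity)
      refine Real.rpow_le_rpow (abs_nonneg _) ?_ hp.le
      rw [← Real.norm_eq_abs]
      exact (φ.1.le_opNorm (x n)).trans (mul_le_of_le_one_left (norm_nonneg _) φ.2)
    have hS₀ : 0 ≤ S := (Real.rpow_nonneg (by positivity) _).trans (le_ciSup hbdd hunit.some)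
    rw [hroot (by positivity) (by positivity), Real.mul_rpow hC.le hS₀]
    exact hT k x _ fun φ hφ => (hroot (by positivity) hS₀).1 (le_ciSup hbdd ⟨φ, hφ⟩)

theorem sq_sum_sq_pow_three_le {Ω : Type*} (s : Finset Ω) (X : Ω → ℝ) :
    (∑ ω ∈ s, X ω ^ 2) ^ 3 ≤ (∑ ω ∈ s, |X ω|) ^ 2 * ∑ ω ∈ s, X ω ^ 4 := by
  set M₁ := ∑ ω ∈ s, |X ω|
  set M₂ := ∑ ω ∈ s, X ω ^ 2
  set M₃ := ∑ ω ∈ s, |X ω| ^ 3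
  set M₄ := ∑ ω ∈ s, X ω ^ 4
  have h₁₃ : M₂ ^ 2 ≤ M₁ * M₃ := sum_sq_le_sum_mul_sum_of_sq_le_mul s
    (fun ω _ => abs_nonneg _) (fun ω _ => by positivity) fun ω _ =>
      le_of_eq <| by rw [← sq_abs (X ω)]; ring
  have h₂₄ : M₃ ^ 2 ≤ M₂ * M₄ := sum_sq_le_sum_mul_sum_of_sq_le_mul s
    (fun ω _ => sq_nonneg _) (fun ω _ => by positivity) fun ω _ =>
      le_of_eq <| by rw [show X ω ^ 4 = (X ω ^ 2) ^ 2 by ring, ← sq_abs (X ω)]; ring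
  have hM₂ : 0 ≤ M₂ := sum_nonneg fun ω _ => sq_nonneg _
  have hM₃ : 0 ≤ M₃ := sum_nonneg fun ω _ => by positivity
  rcases hM₂.eq_or_lt with h0 | hpos
  · rw [← h0, zero_pow three_ne_zero]
    exact mul_nonneg (sq_nonneg _) (sum_nonneg fun ω _ => by positivity)
  refine le_of_mul_le_mul_right ?_ hpos
  calc M₂ ^ 3 * M₂ = (M₂ ^ 2) ^ 2 := by ring
    _ ≤ (M₁ * M₃) ^ 2 := pow_le_pow_left₀ (sq_nonneg _) h₁₃ 2
    _ = M₁ ^ 2 * M₃ ^ 2 := by ring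
    _ ≤ M₁ ^ 2 * (M₂ * M₄) := by gcongr
    _ = M₁ ^ 2 * M₄ * M₂ := by ring

noncomputable def signOf (b : Bool) : ℝ := if b then 1 else -1

@[simp] lemma signOf_true : signOf true = 1 := rfl
@[simp] lemma signOf_false : signOf false = -1 := rfl

lemma signOf_sq (b : Bool) : signOf b ^ 2 = 1 := by cases b <;> norm_num

/- Sums over `ε : ι → Bool` are `2 ^ card ι` times expectations over the independent
Rademacher signs `signOf (ε i)`. -/
namespace Rademacher

variable {ι : Type*} [DecidableEq ι]

lemma sum_comp_update_of_notMem {E : Type*} [AddCommMonoid E] {s : Finset ι} {j : ι}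
    (hj : j ∉ s) (g : Bool → ι → E) (ε : ι → Bool) (b : Bool) :
    ∑ i ∈ s, g (Function.update ε j b i) i = ∑ i ∈ s, g (ε i) i :=
  sum_congr rfl fun i hi => by rw [Function.update_of_ne (ne_of_mem_of_not_mem hi hj)]

variable [Fintype ι]

lemma sum_signOf_mul_eq_zero (j : ι) (f : (ι → Bool) → ℝ)
    (hf : ∀ ε, f (Function.update ε j (!ε j)) = f ε) :
    ∑ ε : ι → Bool, signOf (ε j) * f ε = 0 := by
  refine sum_involution (fun ε _ => Function.update ε j (!ε j)) (fun ε _ => ?_)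
    (fun ε _ _ h => ?_) (fun _ _ => mem_univ _) (fun ε _ => by simp)
  · rw [hf, Function.update_self]
    cases ε j <;> simp
  · simpa using congr_fun h j

variable {E : Type*} [NormedAddCommGroup E] [InnerProductSpace ℝ E]

theorem sum_norm_sum_signOf_smul_sq (s : Finset ι) (u : ι → E) :
    ∑ ε : ι → Bool, ‖∑ i ∈ s, signOf (ε i) • u i‖ ^ 2 =
      2 ^ Fintype.card ι * ∑ i ∈ s, ‖u i‖ ^ 2 := by
  induction s using Finset.induction_on with
  | empty => simp
  | insert j s hj ih =>
    have hcross := sum_signOf_mul_eq_zero j (fun ε => ⟪∑ i ∈ s, signOf (ε i) • u i, u j⟫)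
      fun ε => by rw [sum_comp_update_of_notMem hj (fun b i => signOf b • u i)]
    have expand (ε : ι → Bool) : ‖∑ i ∈ insert j s, signOf (ε i) • u i‖ ^ 2 =
        ‖∑ i ∈ s, signOf (ε i) • u i‖ ^ 2
          + 2 * (signOf (ε j) * ⟪∑ i ∈ s, signOf (ε i) • u i, u j⟫) + ‖u j‖ ^ 2 := by
      rw [sum_insert hj, add_comm, norm_add_sq_real, norm_smul, mul_pow, Real.norm_eq_abs,
        sq_abs, signOf_sq, real_inner_smul_right]
      ring
    rw [sum_congr rfl fun ε _ => expand ε, sum_insert hj]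
    simp only [sum_add_distrib, ← mul_sum, hcross, ih, sum_const, card_univ, Fintype.card_fun,
      Fintype.card_bool, nsmul_eq_mul]
    push_cast
    ring

theorem sum_sum_signOf_mul_sq (s : Finset ι) (a : ι → ℝ) :
    ∑ ε : ι → Bool, (∑ i ∈ s, signOf (ε i) * a i) ^ 2 =
      2 ^ Fintype.card ι * ∑ i ∈ s, a i ^ 2 := by
  simpa [Real.norm_eq_abs, sq_abs] using sum_norm_sum_signOf_smul_sq s a

theorem sum_sum_signOf_mul_pow_four_le (s : Finset ι) (a : ι → ℝ) :
    ∑ ε : ι → Bool, (∑ i ∈ s, signOf (ε i) * a i) ^ 4 ≤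
      3 * 2 ^ Fintype.card ι * (∑ i ∈ s, a i ^ 2) ^ 2 := by
  induction s using Finset.induction_on with
  | empty => simp
  | insert j s hj ih =>
    set X : (ι → Bool) → ℝ := fun ε => ∑ i ∈ s, signOf (ε i) * a i
    have hodd := sum_signOf_mul_eq_zero j (fun ε => 4 * a j * X ε ^ 3 + 4 * a j ^ 3 * X ε)
      fun ε => by simp only [X, sum_comp_update_of_notMem hj (fun b i => signOf b * a i)]
    have expand (ε : ι → Bool) : (∑ i ∈ insert j s, signOf (ε i) * a i) ^ 4 =
        X ε ^ 4 + 6 * a j ^ 2 * X ε ^ 2 + a j ^ 4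
          + signOf (ε j) * (4 * a j * X ε ^ 3 + 4 * a j ^ 3 * X ε) := by
      rw [sum_insert hj]
      linear_combination (6 * X ε ^ 2 * a j ^ 2 + 4 * X ε * a j ^ 3 * signOf (ε j)
        + a j ^ 4 * (signOf (ε j) ^ 2 + 1)) * signOf_sq (ε j)
    have hsq := sum_sum_signOf_mul_sq s a
    rw [sum_congr rfl fun ε _ => expand ε, sum_insert hj]
    simp only [sum_add_distrib, hodd, ← mul_sum, sum_const, card_univ,
      Fintype.card_fun, Fintype.card_bool, nsmul_eq_mul, X, hsq]
    push_cast
    nlinarith [mul_nonneg (pow_nonneg zero_le_two (Fintype.card ι) : (0 : ℝ) ≤ 2 ^ _)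
      (by positivity : (0 : ℝ) ≤ a j ^ 4)]

/-- Khintchine's inequality in `L¹`. -/
theorem two_pow_card_mul_sqrt_sum_sq_le (a : ι → ℝ) :
    2 ^ Fintype.card ι * √(∑ i, a i ^ 2) ≤
      √3 * ∑ ε : ι → Bool, |∑ i, signOf (ε i) * a i| := by
  set N : ℝ := 2 ^ Fintype.card ι
  set σ := ∑ i, a i ^ 2
  set M₁ := ∑ ε : ι → Bool, |∑ i, signOf (ε i) * a i|
  have hN : 0 < N := by positivity
  have hσ : 0 ≤ σ := sum_nonneg fun i _ => sq_nonneg _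
  have hM₁ : 0 ≤ M₁ := sum_nonneg fun ε _ => abs_nonneg _
  have hmoments := sq_sum_sq_pow_three_le univ fun ε : ι → Bool => ∑ i, signOf (ε i) * a i
  rw [sum_sum_signOf_mul_sq] at hmoments
  have h4 := sum_sum_signOf_mul_pow_four_le univ a
  have key : N ^ 2 * σ ≤ 3 * M₁ ^ 2 := by
    rcases hσ.eq_or_lt with h0 | hpos
    · rw [← h0, mul_zero]; positivity
    refine le_of_mul_le_mul_right ?_ (by positivity : 0 < N * σ ^ 2)
    calc N ^ 2 * σ * (N * σ ^ 2) = (N * σ) ^ 3 := by ring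
      _ ≤ M₁ ^ 2 * (3 * N * σ ^ 2) := hmoments.trans (by gcongr)
      _ = 3 * M₁ ^ 2 * (N * σ ^ 2) := by ring
  calc N * √σ = √(N ^ 2 * σ) := by rw [Real.sqrt_mul (by positivity), Real.sqrt_sq hN.le]
    _ ≤ √(3 * M₁ ^ 2) := Real.sqrt_le_sqrt key
    _ = √3 * M₁ := by rw [Real.sqrt_mul (by norm_num), Real.sqrt_sq hM₁]

theorem sum_norm_sum_signOf_smul_le (u : ι → E) :
    ∑ ε : ι → Bool, ‖∑ i, signOf (ε i) • u i‖ ≤ 2 ^ Fintype.card ι * √(∑ i, ‖u i‖ ^ 2) := by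
  set N : ℝ := 2 ^ Fintype.card ι
  have hcs := sq_sum_le_card_mul_sum_sq (s := univ)
    (f := fun ε : ι → Bool => ‖∑ i, signOf (ε i) • u i‖)
  rw [sum_norm_sum_signOf_smul_sq, card_univ, Fintype.card_fun, Fintype.card_bool] at hcs
  push_cast at hcs
  rw [← Real.sqrt_sq (by positivity : (0 : ℝ) ≤ N), ← Real.sqrt_mul (sq_nonneg _)]
  exact Real.le_sqrt_of_sq_le (by linarith)

theorem sum_sqrt_sum_inner_sq_le {κ : Type*} [Fintype κ] (u : ι → E) (x : κ → E) {W : ℝ}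
    (hW : 0 ≤ W) (hx : ∀ v : E, ∑ n, |⟪v, x n⟫| ≤ ‖v‖ * W) :
    ∑ n, √(∑ i, ⟪u i, x n⟫ ^ 2) ≤ √3 * √(∑ i, ‖u i‖ ^ 2) * W := by
  set N : ℝ := 2 ^ Fintype.card ι
  set v : (ι → Bool) → E := fun ε => ∑ i, signOf (ε i) • u i
  have hv (ε : ι → Bool) (n : κ) : ⟪v ε, x n⟫ = ∑ i, signOf (ε i) * ⟪u i, x n⟫ := by
    simp only [v, sum_inner, real_inner_smul_left]
  refine le_of_mul_le_mul_left ?_ (by positivity : 0 < N)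
  calc N * ∑ n, √(∑ i, ⟪u i, x n⟫ ^ 2)
      ≤ ∑ n, √3 * ∑ ε : ι → Bool, |⟪v ε, x n⟫| := by
        rw [mul_sum]
        refine sum_le_sum fun n _ => ?_
        simpa only [hv] using two_pow_card_mul_sqrt_sum_sq_le fun i => ⟪u i, x n⟫
    _ = √3 * ∑ ε : ι → Bool, ∑ n, |⟪v ε, x n⟫| := by rw [← mul_sum, sum_comm]
    _ ≤ √3 * ∑ ε : ι → Bool, ‖v ε‖ * W := by gcongr with ε; exact hx _
    _ ≤ √3 * (N * √(∑ i, ‖u i‖ ^ 2) * W) := by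
        rw [← sum_mul]; gcongr; exact sum_norm_sum_signOf_smul_le u
    _ = N * (√3 * √(∑ i, ‖u i‖ ^ 2) * W) := by ring

end Rademacher

theorem exists_mem_forall_sum_div_sqrt_le {κ : Type*} [Fintype κ] {K : Set (κ → ℝ)}
    (hK : IsCompact K) (hKconv : Convex ℝ K) (hKne : K.Nonempty)
    (hK₀ : ∀ c ∈ K, ∀ n, 0 ≤ c n) {δ : ℝ} (hδ : 0 < δ) :
    ∃ c₀ ∈ K, ∀ c ∈ K, ∑ n, c n / √(c₀ n + δ) ≤ ∑ n, √(c₀ n + δ) := by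
  obtain ⟨c₀, hc₀, hmax⟩ := hK.exists_isMaxOn hKne
    (f := fun c : κ → ℝ => ∑ n, √(c n + δ)) (by fun_prop)
  refine ⟨c₀, hc₀, fun c hc => ?_⟩
  have hpos (n : κ) : 0 < c₀ n + δ := by linarith [hK₀ c₀ hc₀ n]
  have hderiv : HasFDerivAt (fun c : κ → ℝ => ∑ n, √(c n + δ))
      (∑ n, (1 / (2 * √(c₀ n + δ))) • ContinuousLinearMap.proj n) c₀ :=
    HasFDerivAt.fun_sum fun n _ =>
      ((hasFDerivAt_apply n c₀).add_const δ).sqrt (hpos n).ne'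
  have hfirst := hmax.localize.hasFDerivWithinAt_nonpos hderiv.hasFDerivWithinAt
    (mem_posTangentConeAt_of_segment_subset (y := c - c₀)
      (by simpa using hKconv.segment_subset hc₀ hc))
  simp only [FunLike.coe_sum, Finset.sum_apply, FunLike.coe_smul,
    Pi.smul_apply, ContinuousLinearMap.proj_apply, Pi.sub_apply, smul_eq_mul] at hfirst
  calc ∑ n, c n / √(c₀ n + δ)
      = ∑ n, c₀ n / √(c₀ n + δ) + 2 * ∑ n, 1 / (2 * √(c₀ n + δ)) * (c n - c₀ n) := by
        rw [mul_sum, ← sum_add_distrib]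
        refine sum_congr rfl fun n _ => ?_
        field_simp
        ring
    _ ≤ ∑ n, √(c₀ n + δ) := by
        have hle (n : κ) : c₀ n / √(c₀ n + δ) ≤ √(c₀ n + δ) := by
          rw [div_le_iff₀ (Real.sqrt_pos.2 (hpos n)), Real.mul_self_sqrt (hpos n).le]
          linarith
        linarith [sum_le_sum fun n (_ : n ∈ univ) => hle n]

theorem sum_norm_le_of_forall_sum_sq_div_le {E F : Type*} [NormedAddCommGroup E]
    [NormedSpace ℝ E] [NormedAddCommGroup F] [NormedSpace ℝ F] (T : E →ₗ[ℝ] F) {C : ℝ}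
    (hC : 0 ≤ C) (hT : ∀ (k : ℕ) (x : Fin k → E) (M : ℝ),
      (∀ φ : E →L[ℝ] ℝ, ‖φ‖ ≤ 1 → ∑ n, |φ (x n)| ^ (2 : ℝ) ≤ M) →
        ∑ n, ‖T (x n)‖ ^ (2 : ℝ) ≤ C ^ (2 : ℝ) * M)
    {k : ℕ} (x : Fin k → E) {s : Fin k → ℝ} (hs : ∀ n, 0 < s n)
    (hdom : ∀ φ : E →L[ℝ] ℝ, ‖φ‖ ≤ 1 → ∑ n, φ (x n) ^ 2 / s n ≤ ∑ n, s n) :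
    ∑ n, ‖T (x n)‖ ≤ C * ∑ n, s n := by
  have hrescale : ∑ n, ‖T (x n)‖ ^ 2 / s n ≤ C ^ 2 * ∑ n, s n := by
    have key := hT k (fun n => (√(s n))⁻¹ • x n) (∑ n, s n) fun φ hφ => by
      simpa [mul_pow, Real.sq_sqrt (hs _).le, div_eq_inv_mul] using hdom φ hφ
    simpa [norm_smul, mul_pow, Real.sq_sqrt (hs _).le, div_eq_inv_mul] using key
  have hcs : (∑ n, ‖T (x n)‖) ^ 2 ≤ (∑ n, s n) * ∑ n, ‖T (x n)‖ ^ 2 / s n :=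
    sum_sq_le_sum_mul_sum_of_sq_le_mul _ (fun n _ => (hs n).le)
      (fun n _ => by have := hs n; positivity) fun n _ => le_of_eq <| by
        field_simp [(hs n).ne']
  have hZ : 0 ≤ ∑ n, s n := sum_nonneg fun n _ => (hs n).le
  refine abs_le_of_sq_le_sq' ?_ (by positivity) |>.2
  calc (∑ n, ‖T (x n)‖) ^ 2 ≤ (∑ n, s n) * (C ^ 2 * ∑ n, s n) := hcs.trans (by gcongr)
    _ = (C * ∑ n, s n) ^ 2 := by ring

section SquareProfiles

variable {H : Type*} [NormedAddCommGroup H] [InnerProductSpace ℝ H] {κ : Type*}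

def squareProfiles (x : κ → H) : Set (κ → ℝ) :=
  (fun v n => ⟪v, x n⟫ ^ 2) '' Metric.closedBall 0 1

lemma closure_convexHull_squareProfiles_subset_pi (x : κ → H) :
    closure (convexHull ℝ (squareProfiles x)) ⊆ Set.univ.pi fun n => Set.Icc 0 (‖x n‖ ^ 2) := by
  refine closure_minimal (convexHull_min ?_ (convex_pi fun _ _ => convex_Icc _ _))
    (isClosed_set_pi fun _ _ => isClosed_Icc)
  rintro _ ⟨v, hv, rfl⟩ n -
  refine ⟨sq_nonneg _, ?_⟩
  refine sq_le_sq.2 ((abs_real_inner_le_norm v (x n)).trans ?_)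
  rw [abs_norm]
  exact mul_le_of_le_one_left (norm_nonneg _) (mem_closedBall_zero_iff.1 hv)

lemma isCompact_closure_convexHull_squareProfiles (x : κ → H) :
    IsCompact (closure (convexHull ℝ (squareProfiles x))) :=
  (isCompact_univ_pi fun _ => isCompact_Icc).of_isClosed_subset isClosed_closure
    (closure_convexHull_squareProfiles_subset_pi x)

lemma sq_apply_mem_squareProfiles [CompleteSpace H] (x : κ → H) {φ : H →L[ℝ] ℝ}
    (hφ : ‖φ‖ ≤ 1) : (fun n => φ (x n) ^ 2) ∈ squareProfiles x :=
  ⟨(InnerProductSpace.toDual ℝ H).symm φ, by simpa using hφ,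
    by simp [InnerProductSpace.toDual_symm_apply]⟩

variable [Fintype κ]

theorem sum_sqrt_le_of_mem_convexHull_squareProfiles {x : κ → H} {W : ℝ} (hW : 0 ≤ W)
    (hx : ∀ v : H, ∑ n, |⟪v, x n⟫| ≤ ‖v‖ * W) {c : κ → ℝ}
    (hc : c ∈ convexHull ℝ (squareProfiles x)) :
    ∑ n, √(c n) ≤ √3 * W := by
  classical
  obtain ⟨ι, _, w, z, hw₀, hw₁, hz, rfl⟩ := mem_convexHull_iff_exists_fintype.1 hc
  choose v hv hvz using hz
  set u : ι → H := fun i => √(w i) • v i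
  have hu : ∑ i, ‖u i‖ ^ 2 ≤ 1 := by
    rw [← hw₁]
    refine sum_le_sum fun i _ => ?_
    rw [norm_smul, mul_pow, Real.norm_eq_abs, sq_abs, Real.sq_sqrt (hw₀ i)]
    exact mul_le_of_le_one_right (hw₀ i)
      (pow_le_one₀ (norm_nonneg _) (mem_closedBall_zero_iff.1 (hv i)))
  have hcu (n : κ) : (∑ i, w i • z i) n = ∑ i, ⟪u i, x n⟫ ^ 2 := by
    simp only [Finset.sum_apply, Pi.smul_apply, smul_eq_mul, ← hvz, u, real_inner_smul_left,
      mul_pow, Real.sq_sqrt (hw₀ _)]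
  calc ∑ n, √((∑ i, w i • z i) n) = ∑ n, √(∑ i, ⟪u i, x n⟫ ^ 2) := by simp only [hcu]
    _ ≤ √3 * √(∑ i, ‖u i‖ ^ 2) * W := Rademacher.sum_sqrt_sum_inner_sq_le u x hW hx
    _ ≤ √3 * 1 * W := by gcongr; exact Real.sqrt_le_one.2 hu
    _ = √3 * W := by ring

theorem sum_sqrt_le_of_mem_closure_convexHull_squareProfiles {x : κ → H} {W : ℝ} (hW : 0 ≤ W)
    (hx : ∀ v : H, ∑ n, |⟪v, x n⟫| ≤ ‖v‖ * W) {c : κ → ℝ}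
    (hc : c ∈ closure (convexHull ℝ (squareProfiles x))) :
    ∑ n, √(c n) ≤ √3 * W :=
  closure_minimal (fun _ => sum_sqrt_le_of_mem_convexHull_squareProfiles hW hx)
    (isClosed_le (by fun_prop : Continuous fun c : κ → ℝ => ∑ n, √(c n)) continuous_const) hc

end SquareProfiles

lemma sqrt_add_le_sqrt_add_sqrt {a b : ℝ} (ha : 0 ≤ a) (hb : 0 ≤ b) : √(a + b) ≤ √a + √b := by
  rw [Real.sqrt_le_left (by positivity)]
  nlinarith [Real.sq_sqrt ha, Real.sq_sqrt hb, Real.sqrt_nonneg a, Real.sqrt_nonneg b]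

theorem sum_abs_inner_le_of_forall_sum_abs_le {H : Type*} [NormedAddCommGroup H]
    [InnerProductSpace ℝ H] {κ : Type*} [Fintype κ] {x : κ → H} {W : ℝ}
    (hW : ∀ φ : H →L[ℝ] ℝ, ‖φ‖ ≤ 1 → ∑ n, |φ (x n)| ≤ W) (v : H) :
    ∑ n, |⟪v, x n⟫| ≤ ‖v‖ * W := by
  rcases eq_or_ne v 0 with rfl | hv
  · simp
  have hv' : 0 < ‖v‖ := norm_pos_iff.2 hv
  have h := hW (‖v‖⁻¹ • innerSL ℝ v) (by rw [norm_smul, innerSL_apply_norm, norm_inv,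
    norm_norm, inv_mul_cancel₀ hv'.ne'])
  simp only [smul_apply, innerSL_apply_apply, smul_eq_mul, abs_mul,
    abs_inv, abs_norm, ← mul_sum] at h
  rwa [inv_mul_le_iff₀ hv'] at h

theorem sum_norm_le_of_forall_sum_abs_inner_le {H F : Type*} [NormedAddCommGroup H]
    [InnerProductSpace ℝ H] [CompleteSpace H] [NormedAddCommGroup F] [NormedSpace ℝ F]
    (T : H →ₗ[ℝ] F) {C : ℝ} (hC : 0 ≤ C) (hT : ∀ (k : ℕ) (x : Fin k → H) (M : ℝ),
      (∀ φ : H →L[ℝ] ℝ, ‖φ‖ ≤ 1 → ∑ n, |φ (x n)| ^ (2 : ℝ) ≤ M) →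
        ∑ n, ‖T (x n)‖ ^ (2 : ℝ) ≤ C ^ (2 : ℝ) * M)
    {k : ℕ} (x : Fin k → H) {W : ℝ} (hW : 0 ≤ W) (hx : ∀ v : H, ∑ n, |⟪v, x n⟫| ≤ ‖v‖ * W)
    {t : ℝ} (ht : 0 < t) :
    ∑ n, ‖T (x n)‖ ≤ C * (√3 * W + k * t) := by
  have hK := closure_convexHull_squareProfiles_subset_pi x
  obtain ⟨c₀, hc₀, hdom⟩ := exists_mem_forall_sum_div_sqrt_le
    (isCompact_closure_convexHull_squareProfiles x) (convex_convexHull ℝ _).closure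
    ⟨_, subset_closure (subset_convexHull ℝ _ (sq_apply_mem_squareProfiles x (φ := 0) (by simp)))⟩
    (fun c hc n => (hK hc n trivial).1) (pow_pos ht 2)
  have hc₀₀ (n : Fin k) : 0 ≤ c₀ n := (hK hc₀ n trivial).1
  calc ∑ n, ‖T (x n)‖ ≤ C * ∑ n, √(c₀ n + t ^ 2) :=
        sum_norm_le_of_forall_sum_sq_div_le T hC hT x
          (fun n => Real.sqrt_pos.2 (add_pos_of_nonneg_of_pos (hc₀₀ n) (pow_pos ht 2)))
          fun φ hφ => hdom _ (subset_closure (subset_convexHull ℝ _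
            (sq_apply_mem_squareProfiles x hφ)))
    _ ≤ C * ∑ n, (√(c₀ n) + t) := by
        gcongr with n
        simpa [Real.sqrt_sq ht.le] using sqrt_add_le_sqrt_add_sqrt (hc₀₀ n) (sq_nonneg t)
    _ ≤ C * (√3 * W + k * t) := by
        rw [sum_add_distrib, sum_const, card_univ, Fintype.card_fin, nsmul_eq_mul]
        gcongr
        exact sum_sqrt_le_of_mem_closure_convexHull_squareProfiles hW hx hc₀

theorem statement_7_general {H B : Type} [NormedAddCommGroup H] [InnerProductSpace ℝ H]
    [CompleteSpace H] [NormedAddCommGroup B] [NormedSpace ℝ B]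
    (L : H →ₗ[ℝ] B) (hL : AbsolutelySumming 2 L) :
    AbsolutelySumming 1 L := by
  obtain ⟨C, hC, hL₂⟩ := (absolutelySumming_iff two_pos L).1 hL
  refine (absolutelySumming_iff one_pos L).2 ⟨√3 * C, by positivity, fun k x W hW => ?_⟩
  simp only [Real.rpow_one] at hW ⊢
  have hW₀ : 0 ≤ W := by simpa using hW 0 (by simp)
  have hbound (t : ℝ) (ht : 0 < t) : ∑ n, ‖L (x n)‖ ≤ C * (√3 * W + k * t) :=
    sum_norm_le_of_forall_sum_abs_inner_le L hC.le hL₂ x hW₀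
      (sum_abs_inner_le_of_forall_sum_abs_le hW) ht
  have hlim : Tendsto (fun t : ℝ => C * (√3 * W + k * t)) (𝓝[>] 0)
      (𝓝 (C * (√3 * W + k * 0))) :=
    ((by fun_prop : Continuous fun t : ℝ => C * (√3 * W + k * t)).tendsto 0).mono_left
      nhdsWithin_le_nhds
  refine ge_of_tendsto hlim (eventually_nhdsWithin_of_forall hbound) |>.trans_eq ?_
  ring

/-- Every absolutely 2-summing operator `L : H → B` from a separable Hilbert
space to a Banach space is absolutely 1-summing. -/
theorem statement_7 {H B : Type} [NormedAddCommGroup H] [InnerProductSpace ℝ H]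
    [CompleteSpace H] [TopologicalSpace.SeparableSpace H]
    [NormedAddCommGroup B] [NormedSpace ℝ B] [CompleteSpace B]
    (L : H →ₗ[ℝ] B) (hL : AbsolutelySumming 2 L) :
    AbsolutelySumming 1 L :=
  statement_7_general L hL
end

section
/- Let L : H → B be a continuous linear map from a separable Hilbert space H to a Banach space B. If there exist a separable Hilbert space J, a Hilbert–Schmidt map j : H → J, and a continuous linear map k : J → B with L = k ∘ j, then L is absolutely p-summing for every p ≥ 1. -/
open Filter Topology
open scoped RealInnerProductSpace

open Finset

namespace Stmt9

noncomputable def rsgn (b : Bool) : ℝ := if b then 1 else -1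

lemma rsgn_sq (b : Bool) : rsgn b ^ 2 = 1 := by cases b <;> simp [rsgn]

lemma rsgn_not (b : Bool) : rsgn (!b) = - rsgn b := by cases b <;> simp [rsgn]

/-- flipping one coordinate equiv -/
def flipAt {m : ℕ} (t : Fin m) : (Fin m → Bool) ≃ (Fin m → Bool) where
  toFun ε := Function.update ε t (!(ε t))
  invFun ε := Function.update ε t (!(ε t))
  left_inv ε := by
    funext u
    rcases eq_or_ne u t with rfl | hu
    · simp
    · simp [Function.update_of_ne hu]
  right_inv ε := by
    funext u
    rcases eq_or_ne u t with rfl | hu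
    · simp
    · simp [Function.update_of_ne hu]

lemma sum_rsgn_mul {m : ℕ} (t : Fin m) (F : (Fin m → Bool) → ℝ)
    (hF : ∀ ε, F (Function.update ε t (!(ε t))) = F ε) :
    ∑ ε : Fin m → Bool, rsgn (ε t) * F ε = 0 := by
  have h1 : ∑ ε : Fin m → Bool, rsgn (ε t) * F ε
      = ∑ ε : Fin m → Bool, rsgn ((flipAt t ε) t) * F (flipAt t ε) :=
    (Equiv.sum_comp (flipAt t) (fun ε => rsgn (ε t) * F ε)).symm
  have h2 : ∀ ε : Fin m → Bool, rsgn ((flipAt t ε) t) * F (flipAt t ε)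
      = - (rsgn (ε t) * F ε) := by
    intro ε
    have : (flipAt t ε) t = !(ε t) := by simp [flipAt]
    rw [this]
    show rsgn (!(ε t)) * F (Function.update ε t (!(ε t))) = _
    rw [hF, rsgn_not]
    ring
  rw [Finset.sum_congr rfl (fun ε _ => h2 ε), Finset.sum_neg_distrib] at h1
  linarith [h1]

end Stmt9

namespace Stmt9

variable {m : ℕ}

lemma update_invariant {s : Finset (Fin m)} {a : Fin m} (ha : a ∉ s) (c : Fin m → ℝ)
    (ε : Fin m → Bool) (v : Bool) :
    ∑ t ∈ s, rsgn ((Function.update ε a v) t) * c t = ∑ t ∈ s, rsgn (ε t) * c t := by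
  refine Finset.sum_congr rfl fun t ht => ?_
  have : t ≠ a := fun h => ha (h ▸ ht)
  rw [Function.update_of_ne this]

lemma sum_sq_eq (s : Finset (Fin m)) (c : Fin m → ℝ) :
    ∑ ε : Fin m → Bool, (∑ t ∈ s, rsgn (ε t) * c t) ^ 2
      = (Fintype.card (Fin m → Bool) : ℝ) * ∑ t ∈ s, c t ^ 2 := by
  classical
  induction s using Finset.induction_on with
  | empty => simp
  | @insert a s ha ih =>
    have key : ∀ ε : Fin m → Bool,
        (∑ t ∈ insert a s, rsgn (ε t) * c t) ^ 2
          = (∑ t ∈ s, rsgn (ε t) * c t) ^ 2 + c a ^ 2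
            + rsgn (ε a) * (2 * c a * (∑ t ∈ s, rsgn (ε t) * c t)) := by
      intro ε
      rw [Finset.sum_insert ha]
      have h := rsgn_sq (ε a)
      nlinarith [h]
    rw [Finset.sum_congr rfl fun ε _ => key ε]
    rw [Finset.sum_add_distrib, Finset.sum_add_distrib, ih, Finset.sum_const,
      sum_rsgn_mul a _ (fun ε => by rw [update_invariant ha]),
      Finset.sum_insert ha]
    simp [Finset.card_univ]
    ring

lemma sum_pow4_le (s : Finset (Fin m)) (c : Fin m → ℝ) :
    ∑ ε : Fin m → Bool, (∑ t ∈ s, rsgn (ε t) * c t) ^ 4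
      ≤ 3 * (Fintype.card (Fin m → Bool) : ℝ) * (∑ t ∈ s, c t ^ 2) ^ 2 := by
  classical
  induction s using Finset.induction_on with
  | empty => simp
  | @insert a s ha ih =>
    have key : ∀ ε : Fin m → Bool,
        (∑ t ∈ insert a s, rsgn (ε t) * c t) ^ 4
          = (∑ t ∈ s, rsgn (ε t) * c t) ^ 4
            + 6 * c a ^ 2 * (∑ t ∈ s, rsgn (ε t) * c t) ^ 2 + c a ^ 4
            + rsgn (ε a) * (4 * c a * (∑ t ∈ s, rsgn (ε t) * c t) ^ 3
                + 4 * c a ^ 3 * (∑ t ∈ s, rsgn (ε t) * c t)) := by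
      intro ε
      rw [Finset.sum_insert ha]
      rcases Bool.dichotomy (ε a) with h | h <;> rw [h] <;> simp [rsgn] <;> ring
    rw [Finset.sum_congr rfl fun ε _ => key ε]
    rw [Finset.sum_add_distrib, Finset.sum_add_distrib, Finset.sum_add_distrib,
      sum_rsgn_mul a _ (fun ε => by rw [update_invariant ha]),
      Finset.sum_const, ← Finset.mul_sum, sum_sq_eq, Finset.sum_insert ha]
    have hN : (0:ℝ) ≤ (Fintype.card (Fin m → Bool) : ℝ) := by positivity
    have hc2 : (0:ℝ) ≤ ∑ t ∈ s, c t ^ 2 := Finset.sum_nonneg fun t _ => sq_nonneg _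
    simp only [Finset.card_univ, nsmul_eq_mul, add_zero]
    nlinarith [ih, sq_nonneg (c a), sq_nonneg (c a ^ 2), mul_nonneg hN (sq_nonneg (c a ^ 2))]

end Stmt9

namespace Stmt9

lemma khintchine_l1 {m : ℕ} (c : Fin m → ℝ) :
    Real.sqrt (∑ t, c t ^ 2) ≤
      Real.sqrt 3 * ((Fintype.card (Fin m → Bool) : ℝ))⁻¹ *
        ∑ ε : Fin m → Bool, |∑ t, rsgn (ε t) * c t| := by
  classical
  set f : (Fin m → Bool) → ℝ := fun ε => ∑ t, rsgn (ε t) * c t with hf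
  set N : ℝ := (Fintype.card (Fin m → Bool) : ℝ) with hNdef
  have hNpos : 0 < N := by
    have := Fintype.card_pos (α := Fin m → Bool)
    exact_mod_cast Nat.cast_pos.mpr this
  set X : ℝ := ∑ t, c t ^ 2 with hXdef
  have hX0 : 0 ≤ X := Finset.sum_nonneg fun t _ => sq_nonneg _
  set q : ℝ := ∑ ε : Fin m → Bool, |f ε| with hqdef
  have hq0 : 0 ≤ q := Finset.sum_nonneg fun ε _ => abs_nonneg _
  have hr : ∑ ε : Fin m → Bool, f ε ^ 2 = N * X := sum_sq_eq Finset.univ c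
  have hw : ∑ ε : Fin m → Bool, f ε ^ 4 ≤ 3 * N * X ^ 2 := sum_pow4_le Finset.univ c
  have cs1 : (N * X) ^ 2 ≤ q * ∑ ε : Fin m → Bool, |f ε| ^ 3 := by
    have h := Finset.sum_mul_sq_le_sq_mul_sq Finset.univ
      (fun ε => Real.sqrt |f ε|) (fun ε => |f ε| * Real.sqrt |f ε|)
    have e1 : ∀ ε : Fin m → Bool,
        Real.sqrt |f ε| * (|f ε| * Real.sqrt |f ε|) = f ε ^ 2 := by
      intro ε
      have : Real.sqrt |f ε| * Real.sqrt |f ε| = |f ε| :=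
        Real.mul_self_sqrt (abs_nonneg _)
      calc Real.sqrt |f ε| * (|f ε| * Real.sqrt |f ε|)
          = (Real.sqrt |f ε| * Real.sqrt |f ε|) * |f ε| := by ring
        _ = |f ε| * |f ε| := by rw [this]
        _ = f ε ^ 2 := by rw [abs_mul_abs_self]; ring
    have e2 : ∀ ε : Fin m → Bool, (Real.sqrt |f ε|) ^ 2 = |f ε| :=
      fun ε => Real.sq_sqrt (abs_nonneg _)
    have e3 : ∀ ε : Fin m → Bool, (|f ε| * Real.sqrt |f ε|) ^ 2 = |f ε| ^ 3 := by
      intro ε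
      rw [mul_pow, Real.sq_sqrt (abs_nonneg _)]
      ring
    rw [Finset.sum_congr rfl fun ε _ => e1 ε, Finset.sum_congr rfl fun ε _ => e2 ε,
      Finset.sum_congr rfl fun ε _ => e3 ε, hr] at h
    exact h
  have cs2 : (∑ ε : Fin m → Bool, |f ε| ^ 3) ^ 2 ≤ (N * X) * (3 * N * X ^ 2) := by
    have h := Finset.sum_mul_sq_le_sq_mul_sq Finset.univ
      (fun ε => |f ε|) (fun ε => f ε ^ 2)
    have e1 : ∀ ε : Fin m → Bool, |f ε| * f ε ^ 2 = |f ε| ^ 3 := by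
      intro ε
      rw [show f ε ^ 2 = |f ε| ^ 2 from (sq_abs _).symm]
      ring
    have e2 : ∀ ε : Fin m → Bool, |f ε| ^ 2 = f ε ^ 2 := fun ε => sq_abs _
    have e3 : ∀ ε : Fin m → Bool, (f ε ^ 2) ^ 2 = f ε ^ 4 := fun ε => by ring
    rw [Finset.sum_congr rfl fun ε _ => e1 ε, Finset.sum_congr rfl fun ε _ => e2 ε,
      Finset.sum_congr rfl fun ε _ => e3 ε, hr] at h
    have h4 : (0:ℝ) ≤ N * X := mul_nonneg hNpos.le hX0
    exact h.trans (mul_le_mul_of_nonneg_left hw h4)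
  -- combine
  rcases eq_or_lt_of_le hX0 with hX | hX
  · rw [← hX, Real.sqrt_zero]
    positivity
  · have hu0 : 0 ≤ ∑ ε : Fin m → Bool, |f ε| ^ 3 :=
      Finset.sum_nonneg fun ε _ => pow_nonneg (abs_nonneg _) 3
    -- (NX)^4 ≤ q^2 * u^2 ≤ q^2 * (NX * 3N X^2) = 3 q^2 N^2 X^3
    have key : (N * X) ^ 4 ≤ 3 * q ^ 2 * N ^ 2 * X ^ 3 := by
      have h1 : ((N * X) ^ 2) ^ 2 ≤ (q * ∑ ε : Fin m → Bool, |f ε| ^ 3) ^ 2 := by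
        apply pow_le_pow_left₀ (by positivity) cs1
      calc (N * X) ^ 4 = ((N * X) ^ 2) ^ 2 := by ring
        _ ≤ (q * ∑ ε : Fin m → Bool, |f ε| ^ 3) ^ 2 := h1
        _ = q ^ 2 * (∑ ε : Fin m → Bool, |f ε| ^ 3) ^ 2 := by ring
        _ ≤ q ^ 2 * ((N * X) * (3 * N * X ^ 2)) :=
            mul_le_mul_of_nonneg_left cs2 (sq_nonneg _)
        _ = 3 * q ^ 2 * N ^ 2 * X ^ 3 := by ring
    have hXle : X ≤ 3 * q ^ 2 / N ^ 2 := by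
      rw [le_div_iff₀ (by positivity)]
      have h3 : 0 < N ^ 2 * X ^ 3 := by positivity
      nlinarith [key]
    have : Real.sqrt X ≤ Real.sqrt (3 * q ^ 2 / N ^ 2) := Real.sqrt_le_sqrt hXle
    refine this.trans (le_of_eq ?_)
    rw [show 3 * q ^ 2 / N ^ 2 = (Real.sqrt 3 * N⁻¹ * q) ^ 2 by
      rw [mul_pow, mul_pow, Real.sq_sqrt (by norm_num : (0:ℝ) ≤ 3)]
      field_simp]
    exact Real.sqrt_sq (by positivity)

end Stmt9

namespace Stmt9

open scoped RealInnerProductSpace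

lemma summable_abs_mul {ι : Type*} {a c : ι → ℝ} (ha : Summable fun i => a i ^ 2)
    (hc : Summable fun i => c i ^ 2) : Summable fun i => |a i * c i| := by
  refine Summable.of_nonneg_of_le (fun i => abs_nonneg _) (fun i => ?_)
    (((ha.add hc).div_const 2))
  have h1 : (0:ℝ) ≤ (|a i| - |c i|) ^ 2 := sq_nonneg _
  have h2 : |a i * c i| = |a i| * |c i| := abs_mul _ _
  have h3 : |a i| ^ 2 = a i ^ 2 := sq_abs _
  have h4 : |c i| ^ 2 = c i ^ 2 := sq_abs _
  nlinarith [h1]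

lemma tsum_abs_mul_le {ι : Type*} {a c : ι → ℝ} (ha : Summable fun i => a i ^ 2)
    (hc : Summable fun i => c i ^ 2) :
    ∑' i, |a i * c i| ≤ Real.sqrt (∑' i, a i ^ 2) * Real.sqrt (∑' i, c i ^ 2) := by
  refine Summable.tsum_le_of_sum_le (summable_abs_mul ha hc) (fun s => ?_)
  have hA : ∑ i ∈ s, a i ^ 2 ≤ ∑' i, a i ^ 2 :=
    Summable.sum_le_tsum s (fun i _ => sq_nonneg _) ha
  have hC : ∑ i ∈ s, c i ^ 2 ≤ ∑' i, c i ^ 2 :=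
    Summable.sum_le_tsum s (fun i _ => sq_nonneg _) hc
  have h := Finset.sum_mul_sq_le_sq_mul_sq s (fun i => |a i|) (fun i => |c i|)
  have e1 : ∀ i, |a i| * |c i| = |a i * c i| := fun i => (abs_mul _ _).symm
  have hle : (∑ i ∈ s, |a i * c i|) ^ 2 ≤ (∑' i, a i ^ 2) * (∑' i, c i ^ 2) := by
    rw [← Finset.sum_congr rfl fun i _ => e1 i]
    refine h.trans ?_
    have g1 : ∑ i ∈ s, |a i| ^ 2 = ∑ i ∈ s, a i ^ 2 :=
      Finset.sum_congr rfl fun i _ => sq_abs _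
    have g2 : ∑ i ∈ s, |c i| ^ 2 = ∑ i ∈ s, c i ^ 2 :=
      Finset.sum_congr rfl fun i _ => sq_abs _
    rw [g1, g2]
    have hc0 : (0:ℝ) ≤ ∑ i ∈ s, c i ^ 2 := Finset.sum_nonneg fun i _ => sq_nonneg _
    have ha0 : (0:ℝ) ≤ ∑' i, a i ^ 2 := tsum_nonneg fun i => sq_nonneg _
    exact mul_le_mul hA hC hc0 ha0
  have h0 : (0:ℝ) ≤ ∑ i ∈ s, |a i * c i| := Finset.sum_nonneg fun i _ => abs_nonneg _
  calc ∑ i ∈ s, |a i * c i|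
      = Real.sqrt ((∑ i ∈ s, |a i * c i|) ^ 2) := (Real.sqrt_sq h0).symm
    _ ≤ Real.sqrt ((∑' i, a i ^ 2) * (∑' i, c i ^ 2)) := Real.sqrt_le_sqrt hle
    _ = _ := Real.sqrt_mul (tsum_nonneg fun i => sq_nonneg _) _

variable {H J : Type*} [NormedAddCommGroup H] [InnerProductSpace ℝ H] [CompleteSpace H]
  [NormedAddCommGroup J] [InnerProductSpace ℝ J] [CompleteSpace J]

lemma summable_coeff {ι : Type*} (b : HilbertBasis ι ℝ H) (x : H) :
    Summable fun i => ⟪b i, x⟫ ^ 2 := by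
  refine (b.summable_inner_mul_inner x x).congr fun i => ?_
  rw [sq, real_inner_comm x (b i)]

lemma exists_hs_ext {ι : Type*} (b : HilbertBasis ι ℝ H) (j : H →ₗ[ℝ] J)
    (hsum : Summable fun i => ‖j (b i)‖ ^ 2) :
    ∃ T : H →L[ℝ] J, ∀ x, HasSum (fun i => ⟪b i, x⟫ • j (b i)) (T x) := by
  have hnorms : ∀ x : H, Summable fun i => ‖(⟪b i, x⟫ • j (b i) : J)‖ := by
    intro x
    refine (summable_abs_mul (summable_coeff b x) hsum).congr fun i => ?_
    rw [abs_mul, abs_of_nonneg (norm_nonneg _), norm_smul, Real.norm_eq_abs]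
  have hterms : ∀ x : H, Summable fun i => ⟪b i, x⟫ • j (b i) :=
    fun x => (hnorms x).of_norm
  set F : H →ₗ[ℝ] J :=
    { toFun := fun x => ∑' i, ⟪b i, x⟫ • j (b i)
      map_add' := by
        intro x y
        rw [← Summable.tsum_add (hterms x) (hterms y)]
        exact tsum_congr fun i => by rw [inner_add_right, add_smul]
      map_smul' := by
        intro r x
        simp only [RingHom.id_apply]
        have e : (fun i => ⟪b i, r • x⟫ • j (b i))
            = fun i => r • (⟪b i, x⟫ • j (b i)) :=
          funext fun i => by rw [real_inner_smul_right, smul_smul]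
        rw [e]
        exact ((hterms x).hasSum.const_smul r).tsum_eq } with hF
  have hbound : ∀ x, ‖F x‖ ≤ Real.sqrt (∑' i, ‖j (b i)‖ ^ 2) * ‖x‖ := by
    intro x
    have h1 : ‖F x‖ ≤ ∑' i, ‖⟪b i, x⟫ • j (b i)‖ :=
      norm_tsum_le_tsum_norm (hnorms x)
    refine h1.trans ?_
    have h2 : (∑' i, ‖⟪b i, x⟫ • j (b i)‖) = ∑' i, |⟪b i, x⟫ * ‖j (b i)‖| :=
      tsum_congr fun i => by
        rw [abs_mul, abs_of_nonneg (norm_nonneg _), norm_smul, Real.norm_eq_abs]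
    rw [h2]
    refine (tsum_abs_mul_le (summable_coeff b x) hsum).trans ?_
    have h3 : Real.sqrt (∑' i, ⟪b i, x⟫ ^ 2) ≤ ‖x‖ := by
      have hb := (b.orthonormal).tsum_inner_products_le x
      have : (∑' i, ⟪b i, x⟫ ^ 2) ≤ ‖x‖ ^ 2 := by
        refine le_trans (le_of_eq (tsum_congr fun i => ?_)) hb
        rw [Real.norm_eq_abs, sq_abs]
      exact (Real.sqrt_le_sqrt this).trans (by rw [Real.sqrt_sq (norm_nonneg _)])
    rw [mul_comm]
    exact mul_le_mul_of_nonneg_left h3 (Real.sqrt_nonneg _)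
  refine ⟨F.mkContinuous _ hbound, fun x => ?_⟩
  exact (hterms x).hasSum

lemma tsum_inner_sq {ι : Type*} (b : HilbertBasis ι ℝ H) (x : H) :
    ∑' i, ⟪b i, x⟫ ^ 2 = ‖x‖ ^ 2 := by
  have h := b.tsum_inner_mul_inner x x
  rw [real_inner_self_eq_norm_sq] at h
  rw [← h]
  exact tsum_congr fun i => by rw [sq, real_inner_comm x (b i)]

lemma trace_bound {ι : Type*} (b : HilbertBasis ι ℝ H) (T : H →L[ℝ] J)
    (hsum : Summable fun i => ‖T (b i)‖ ^ 2) {m : ℕ} (v : Fin m → H)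
    (hv : Orthonormal ℝ v) :
    ∑ t, ‖T (v t)‖ ^ 2 ≤ ∑' i, ‖T (b i)‖ ^ 2 := by
  obtain ⟨w, f, hfw⟩ := exists_hilbertBasis ℝ J
  set u : w → H := fun α => (ContinuousLinearMap.adjoint T) (f α) with hu
  have hadj : ∀ (α : w) (y : H), ⟪f α, T y⟫ = ⟪u α, y⟫ := fun α y =>
    (ContinuousLinearMap.adjoint_inner_left T y (f α)).symm
  have hTy : ∀ y : H, Summable (fun α : w => ⟪u α, y⟫ ^ 2) ∧
      (∑' α : w, ⟪u α, y⟫ ^ 2) = ‖T y‖ ^ 2 := by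
    intro y
    have h1 : Summable fun α : w => ⟪f α, T y⟫ ^ 2 := summable_coeff f (T y)
    have h2 := tsum_inner_sq f (T y)
    refine ⟨h1.congr fun α => by rw [hadj], ?_⟩
    rw [← h2]
    exact tsum_congr fun α => by rw [hadj]
  set g : w → ι → ℝ := fun α i => ⟪f α, T (b i)⟫ ^ 2 with hg
  have hgu : ∀ α : w, Summable (g α) ∧ (∑' i, g α i) = ‖u α‖ ^ 2 := by
    intro α
    have e : ∀ i, g α i = ⟪b i, u α⟫ ^ 2 := fun i => by
      rw [hg]
      simp only
      rw [hadj α (b i), real_inner_comm]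
    refine ⟨(summable_coeff b (u α)).congr fun i => (e i).symm, ?_⟩
    rw [tsum_congr fun i => e i]
    exact tsum_inner_sq b (u α)
  have hgT : ∀ i, Summable (fun α : w => g α i) ∧ (∑' α : w, g α i) = ‖T (b i)‖ ^ 2 :=
    fun i => ⟨summable_coeff f (T (b i)), tsum_inner_sq f (T (b i))⟩
  have key : ∑' α : w, ENNReal.ofReal (‖u α‖ ^ 2)
      = ENNReal.ofReal (∑' i, ‖T (b i)‖ ^ 2) := by
    calc ∑' α : w, ENNReal.ofReal (‖u α‖ ^ 2)
        = ∑' α : w, ∑' i, ENNReal.ofReal (g α i) := by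
          refine tsum_congr fun α => ?_
          rw [← (hgu α).2, ENNReal.ofReal_tsum_of_nonneg (fun i => sq_nonneg _) (hgu α).1]
      _ = ∑' i, ∑' α : w, ENNReal.ofReal (g α i) := ENNReal.tsum_comm
      _ = ∑' i, ENNReal.ofReal (‖T (b i)‖ ^ 2) := by
          refine tsum_congr fun i => ?_
          rw [← ENNReal.ofReal_tsum_of_nonneg (fun α => sq_nonneg _) (hgT i).1, (hgT i).2]
      _ = ENNReal.ofReal (∑' i, ‖T (b i)‖ ^ 2) :=
          (ENNReal.ofReal_tsum_of_nonneg (fun i => sq_nonneg _) hsum).symm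
  have hne : (∑' α : w, ENNReal.ofReal (‖u α‖ ^ 2)) ≠ ⊤ := by
    rw [key]; exact ENNReal.ofReal_ne_top
  have husum : Summable fun α : w => ‖u α‖ ^ 2 := by
    refine (ENNReal.summable_toReal hne).congr fun α => ?_
    rw [ENNReal.toReal_ofReal (sq_nonneg _)]
  have htsum_u : (∑' α : w, ‖u α‖ ^ 2) = ∑' i, ‖T (b i)‖ ^ 2 := by
    have h := congrArg ENNReal.toReal key
    rw [ENNReal.tsum_toReal_eq (fun α => ENNReal.ofReal_ne_top),
      ENNReal.toReal_ofReal (tsum_nonneg fun i => sq_nonneg _)] at h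
    rw [← h]
    exact tsum_congr fun α => by rw [ENNReal.toReal_ofReal (sq_nonneg _)]
  calc ∑ t, ‖T (v t)‖ ^ 2
      = ∑ t, ∑' α : w, ⟪u α, v t⟫ ^ 2 :=
        Finset.sum_congr rfl fun t _ => ((hTy (v t)).2).symm
    _ = ∑' α : w, ∑ t, ⟪u α, v t⟫ ^ 2 :=
        (Summable.tsum_finsetSum fun t _ => (hTy (v t)).1).symm
    _ ≤ ∑' α : w, ‖u α‖ ^ 2 := by
        refine Summable.tsum_le_tsum (fun α => ?_)
          (summable_sum fun t _ => (hTy (v t)).1) husum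
        have hb := hv.sum_inner_products_le (s := Finset.univ) (u α)
        refine le_trans (le_of_eq ?_) hb
        refine Finset.sum_congr rfl fun t _ => ?_
        rw [Real.norm_eq_abs, sq_abs, real_inner_comm]
    _ = ∑' i, ‖T (b i)‖ ^ 2 := htsum_u

end Stmt9

set_option maxHeartbeats 1000000 in
set_option synthInstance.maxHeartbeats 400000 in
/-- Let `L : H → B` be a continuous linear map from a separable Hilbert space
to a Banach space.  If `L = k ∘ j` with `j : H → J` Hilbert–Schmidt into a separable Hilbert
space `J` and `k : J → B` continuous linear, then `L` is absolutely `p`-summing for all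
`p ≥ 1`. -/
theorem statement_9 {H J B : Type}
    [NormedAddCommGroup H] [InnerProductSpace ℝ H] [CompleteSpace H]
    [TopologicalSpace.SeparableSpace H]
    [NormedAddCommGroup J] [InnerProductSpace ℝ J] [CompleteSpace J]
    [TopologicalSpace.SeparableSpace J]
    [NormedAddCommGroup B] [NormedSpace ℝ B] [CompleteSpace B]
    (L : H →L[ℝ] B) (j : H →ₗ[ℝ] J) (k : J →L[ℝ] B)
    (hj : IsHilbertSchmidtMap j) (hfact : ∀ x, k (j x) = L x)
    (p : ℝ) (hp : 1 ≤ p) :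
    AbsolutelySumming p (L : H →ₗ[ℝ] B) := by
  classical
  obtain ⟨ι, b, hsum0⟩ := hj
  obtain ⟨T, hT⟩ := Stmt9.exists_hs_ext b j hsum0
  have hp0 : (0:ℝ) < p := lt_of_lt_of_le one_pos hp
  have hpne : p ≠ 0 := ne_of_gt hp0
  -- T agrees with j on basis vectors
  have hTb : ∀ i0, T (b i0) = j (b i0) := by
    intro i0
    have h1 := hT (b i0)
    have h2 : HasSum (fun i => ⟪b i, b i0⟫ • j (b i)) (j (b i0)) := by
      have hz : ∀ i, i ≠ i0 → ⟪b i, b i0⟫ • j (b i) = 0 := by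
        intro i hi
        rw [b.orthonormal.2 hi, zero_smul]
      have hh := hasSum_single (f := fun i => ⟪b i, b i0⟫ • j (b i)) i0 hz
      have h11 : ⟪b i0, b i0⟫ • j (b i0) = j (b i0) := by
        have hn := b.orthonormal.1 i0
        rw [real_inner_self_eq_norm_sq, hn, one_pow, one_smul]
      beta_reduce at hh
      rwa [h11] at hh
    exact h1.unique h2
  have hsumT : Summable fun i => ‖T (b i)‖ ^ 2 :=
    hsum0.congr fun i => by rw [hTb i]
  set M2 : ℝ := ∑' i, ‖T (b i)‖ ^ 2 with hM2def
  have hM2nonneg : 0 ≤ M2 := tsum_nonneg fun i => sq_nonneg _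
  set M : ℝ := Real.sqrt M2 with hMdef
  -- k ∘ T = L
  have hkT : ∀ y, k (T y) = L y := by
    intro y
    have h1 : HasSum (fun i => ⟪b i, y⟫ • L (b i)) (k (T y)) := by
      have h0 := (hT y).mapL k
      have e : (fun i => k (⟪b i, y⟫ • j (b i))) = fun i => ⟪b i, y⟫ • L (b i) :=
        funext fun i => by rw [ContinuousLinearMap.map_smul, hfact]
      rwa [e] at h0
    have h2 : HasSum (fun i => ⟪b i, y⟫ • L (b i)) (L y) := by
      have h0 := (b.hasSum_repr y).mapL L
      have e : (fun i => L (b.repr y i • b i)) = fun i => ⟪b i, y⟫ • L (b i) :=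
        funext fun i => by rw [ContinuousLinearMap.map_smul, b.repr_apply_apply]
      rwa [e] at h0
    exact h1.unique h2
  refine ⟨max 1 (‖k‖ * Real.sqrt 3 * M), lt_of_lt_of_le one_pos (le_max_left _ _), ?_⟩
  intro kk x
  set S0 : ℝ :=
    ⨆ φ : {ψ : H →L[ℝ] ℝ // ‖ψ‖ ≤ 1}, (∑ n, |φ.1 (x n)| ^ p) ^ (1 / p) with hS0def
  have hBdd : BddAbove (Set.range fun φ : {ψ : H →L[ℝ] ℝ // ‖ψ‖ ≤ 1} =>
      (∑ n, |φ.1 (x n)| ^ p) ^ (1 / p)) := by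
    refine ⟨(∑ n, ‖x n‖ ^ p) ^ (1 / p), ?_⟩
    rintro _ ⟨φ, rfl⟩
    refine Real.rpow_le_rpow (Finset.sum_nonneg fun n _ =>
      Real.rpow_nonneg (abs_nonneg _) _) (Finset.sum_le_sum fun n _ => ?_)
      (by positivity)
    refine Real.rpow_le_rpow (abs_nonneg _) ?_ hp0.le
    calc |φ.1 (x n)| = ‖φ.1 (x n)‖ := (Real.norm_eq_abs _).symm
      _ ≤ ‖φ.1‖ * ‖x n‖ := φ.1.le_opNorm _
      _ ≤ 1 * ‖x n‖ := by
          exact mul_le_mul_of_nonneg_right φ.2 (norm_nonneg _)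
      _ = ‖x n‖ := one_mul _
  have hS0 : 0 ≤ S0 := by
    have h00 : ((∑ n, |((⟨0, by rw [norm_zero]; exact zero_le_one⟩ : {ψ : H →L[ℝ] ℝ // ‖ψ‖ ≤ 1}).1 : H →L[ℝ] ℝ) (x n)| ^ p) ^ (1 / p) : ℝ) = 0 := by
      simp [Real.zero_rpow hpne, Real.zero_rpow (one_div_ne_zero hpne),
        Real.zero_rpow (inv_ne_zero hpne)]
    have := le_ciSup hBdd (⟨0, by rw [norm_zero]; exact zero_le_one⟩ : {ψ : H →L[ℝ] ℝ // ‖ψ‖ ≤ 1})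
    rw [h00] at this
    exact this
  -- finite dimensional subspace
  set V : Submodule ℝ H := Submodule.span ℝ (Set.range x) with hVdef
  haveI hVfin : FiniteDimensional ℝ V :=
    FiniteDimensional.span_of_finite ℝ (Set.finite_range x)
  set m : ℕ := Module.finrank ℝ V with hmdef
  have hfin : Module.finrank ℝ V = m := rfl
  set Tv : V →L[ℝ] J := T.comp (Submodule.subtypeL V) with hTvdef
  set A : V →L[ℝ] V := (ContinuousLinearMap.adjoint Tv).comp Tv with hAdef
  have hA : (A : V →ₗ[ℝ] V).IsSymmetric := by
    intro u w
    show ⟪A u, w⟫ = ⟪u, A w⟫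
    rw [hAdef]
    simp only [ContinuousLinearMap.comp_apply]
    rw [ContinuousLinearMap.adjoint_inner_left, ContinuousLinearMap.adjoint_inner_right]
  set bV : OrthonormalBasis (Fin m) ℝ V := hA.eigenvectorBasis hfin with hbVdef
  set mu : Fin m → ℝ := hA.eigenvalues hfin with hmudef
  have hApply : ∀ t, A (bV t) = mu t • bV t := by
    intro t
    have := hA.apply_eigenvectorBasis hfin t
    rw [hbVdef]
    exact_mod_cast this
  have hv : Orthonormal ℝ (fun t => ((bV t : V) : H)) := by
    constructor
    · intro t
      exact bV.orthonormal.1 t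
    · intro s t hst
      exact bV.orthonormal.2 hst
  have hinner_one : ∀ t, ⟪bV t, bV t⟫ = (1:ℝ) := by
    intro t
    rw [real_inner_self_eq_norm_sq, bV.orthonormal.1 t, one_pow]
  have hmu : ∀ t, mu t = ‖T ((bV t : V) : H)‖ ^ 2 := by
    intro t
    have h1 : ⟪A (bV t), bV t⟫ = mu t := by
      rw [hApply t, real_inner_smul_left, hinner_one, mul_one]
    have h2 : ⟪A (bV t), bV t⟫ = ‖Tv (bV t)‖ ^ 2 := by
      rw [hAdef]
      simp only [ContinuousLinearMap.comp_apply]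
      rw [ContinuousLinearMap.adjoint_inner_left, real_inner_self_eq_norm_sq]
    have h3 : Tv (bV t) = T ((bV t : V) : H) := rfl
    rw [← h1, h2, h3]
  have hmu0 : ∀ t, 0 ≤ mu t := fun t => (hmu t).symm ▸ sq_nonneg _
  have hexp : ∀ z : V, ‖T (z : H)‖ ^ 2 = ∑ t, mu t * ⟪bV t, z⟫ ^ 2 := by
    intro z
    have h0 : ‖T (z : H)‖ ^ 2 = ⟪A z, z⟫ := by
      rw [hAdef]
      simp only [ContinuousLinearMap.comp_apply]
      rw [ContinuousLinearMap.adjoint_inner_left, real_inner_self_eq_norm_sq]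
      rfl
    rw [h0, ← bV.sum_inner_mul_inner (A z) z]
    refine Finset.sum_congr rfl fun t _ => ?_
    have he : ⟪A z, bV t⟫ = mu t * ⟪bV t, z⟫ := by
      calc ⟪A z, bV t⟫ = ⟪z, A (bV t)⟫ := hA z (bV t)
        _ = mu t * ⟪z, bV t⟫ := by rw [hApply t, real_inner_smul_right]
        _ = mu t * ⟪bV t, z⟫ := by rw [real_inner_comm]
    rw [he]
    ring
  have htr : ∑ t, mu t ≤ M2 := by
    calc ∑ t, mu t = ∑ t, ‖T ((bV t : V) : H)‖ ^ 2 :=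
        Finset.sum_congr rfl fun t _ => hmu t
      _ ≤ M2 := Stmt9.trace_bound b T hsumT _ hv
  have hmem : ∀ n, x n ∈ V := fun n => Submodule.subset_span ⟨n, rfl⟩
  set x' : Fin kk → V := fun n => ⟨x n, hmem n⟩ with hx'def
  set c : Fin kk → Fin m → ℝ := fun n t => Real.sqrt (mu t) * ⟪bV t, x' n⟫ with hcdef
  have hc : ∀ n, ‖T (x n)‖ ^ 2 = ∑ t, c n t ^ 2 := by
    intro n
    have h1 : ((x' n : V) : H) = x n := rfl
    have := hexp (x' n)
    rw [h1] at this
    rw [this]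
    refine Finset.sum_congr rfl fun t _ => ?_
    rw [hcdef]
    simp only
    rw [mul_pow, Real.sq_sqrt (hmu0 t)]
  set z : (Fin m → Bool) → H :=
    fun ε => ∑ t, (Stmt9.rsgn (ε t) * Real.sqrt (mu t)) • ((bV t : V) : H) with hzdef
  have hz : ∀ ε n, ⟪z ε, x n⟫ = ∑ t, Stmt9.rsgn (ε t) * c n t := by
    intro ε n
    rw [hzdef]
    simp only
    rw [sum_inner]
    refine Finset.sum_congr rfl fun t _ => ?_
    rw [real_inner_smul_left]
    have h1 : ⟪((bV t : V) : H), x n⟫ = ⟪bV t, x' n⟫ := by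
      rw [show x n = ((x' n : V) : H) from rfl]
      rfl
    rw [h1, hcdef]
    simp only
    ring
  have hznorm : ∀ ε, ‖z ε‖ ^ 2 = ∑ t, mu t := by
    intro ε
    rw [hzdef]
    simp only
    rw [← real_inner_self_eq_norm_sq]
    rw [hv.inner_sum (fun t => Stmt9.rsgn (ε t) * Real.sqrt (mu t))
      (fun t => Stmt9.rsgn (ε t) * Real.sqrt (mu t)) Finset.univ]
    refine Finset.sum_congr rfl fun t _ => ?_
    have h3 : (Stmt9.rsgn (ε t) * Real.sqrt (mu t)) * (Stmt9.rsgn (ε t) * Real.sqrt (mu t))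
        = mu t := by
      have h1 := Stmt9.rsgn_sq (ε t)
      have h2 := Real.sq_sqrt (hmu0 t)
      calc (Stmt9.rsgn (ε t) * Real.sqrt (mu t)) * (Stmt9.rsgn (ε t) * Real.sqrt (mu t))
          = (Stmt9.rsgn (ε t) ^ 2) * (Real.sqrt (mu t) ^ 2) := by ring
        _ = mu t := by rw [h1, h2, one_mul]
    simp only [starRingEnd_apply, star_trivial]
    exact h3
  have hznorm' : ∀ ε, ‖z ε‖ ≤ M := by
    intro ε
    rw [← Real.sqrt_sq (norm_nonneg (z ε)), hznorm ε]
    exact Real.sqrt_le_sqrt htr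
  -- goal reduction
  have hgoal : (∑ n, ‖L (x n)‖ ^ p) ^ (1/p) ≤ max 1 (‖k‖ * Real.sqrt 3 * M) * S0 := by
    by_cases hM2 : M2 = 0
    · -- degenerate case
      have hmu_zero : ∀ t, mu t = 0 := by
        intro t
        have h1 : ∑ t, mu t ≤ 0 := hM2 ▸ htr
        have h2 : ∀ t ∈ Finset.univ, (0:ℝ) ≤ mu t := fun t _ => hmu0 t
        have := Finset.sum_nonneg h2
        have hall := (Finset.sum_eq_zero_iff_of_nonneg h2).1 (le_antisymm h1 this)
        exact hall t (Finset.mem_univ t)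
      have hLz : ∀ n, ‖L (x n)‖ = 0 := by
        intro n
        have h1 : ‖T (x n)‖ ^ 2 = 0 := by
          rw [hc n]
          refine Finset.sum_eq_zero fun t _ => ?_
          rw [hcdef]
          simp [hmu_zero t]
        have h2 : T (x n) = 0 := by
          have := pow_eq_zero_iff (n := 2) (by norm_num) |>.1 h1
          exact norm_eq_zero.1 this
        rw [← hkT (x n), h2, map_zero, norm_zero]
      have : (∑ n, ‖L (x n)‖ ^ p) = 0 := by
        refine Finset.sum_eq_zero fun n _ => ?_
        rw [hLz n, Real.zero_rpow hpne]
      rw [this, Real.zero_rpow (one_div_ne_zero hpne)]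
      have hC : (0:ℝ) ≤ max 1 (‖k‖ * Real.sqrt 3 * M) :=
        le_trans zero_le_one (le_max_left _ _)
      exact mul_nonneg hC hS0
    · have hM2pos : 0 < M2 := lt_of_le_of_ne hM2nonneg (Ne.symm hM2)
      have hMpos : 0 < M := Real.sqrt_pos.2 hM2pos
      set psi : (Fin m → Bool) → (H →L[ℝ] ℝ) :=
        fun ε => M⁻¹ • innerSL ℝ (z ε) with hpsidef
      have hpsin : ∀ ε, ‖psi ε‖ ≤ 1 := by
        intro ε
        show ‖M⁻¹ • innerSL ℝ (z ε)‖ ≤ 1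
        refine ContinuousLinearMap.opNorm_le_bound _ zero_le_one (fun y => ?_)
        have h1 : (M⁻¹ • innerSL ℝ (z ε)) y = M⁻¹ * ⟪z ε, y⟫ := by
          simp [ContinuousLinearMap.smul_apply, innerSL_apply_apply, smul_eq_mul]
        rw [h1, Real.norm_eq_abs, abs_mul, abs_of_nonneg (inv_nonneg.2 hMpos.le)]
        have h2 : |⟪z ε, y⟫| ≤ ‖z ε‖ * ‖y‖ := abs_real_inner_le_norm _ _
        calc M⁻¹ * |⟪z ε, y⟫| ≤ M⁻¹ * (‖z ε‖ * ‖y‖) :=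
            mul_le_mul_of_nonneg_left h2 (inv_nonneg.2 hMpos.le)
          _ ≤ M⁻¹ * (M * ‖y‖) := by
              refine mul_le_mul_of_nonneg_left ?_ (inv_nonneg.2 hMpos.le)
              exact mul_le_mul_of_nonneg_right (hznorm' ε) (norm_nonneg y)
          _ = 1 * ‖y‖ := by field_simp
      have hpsieq : ∀ ε n, ⟪z ε, x n⟫ = M * psi ε (x n) := by
        intro ε n
        have h1 : psi ε (x n) = M⁻¹ * ⟪z ε, x n⟫ := by
          simp only [hpsidef, ContinuousLinearMap.smul_apply, innerSL_apply_apply, smul_eq_mul]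
        rw [h1]
        field_simp
      have hle2 : ∀ ε, ∑ n, |psi ε (x n)| ^ p ≤ S0 ^ p := by
        intro ε
        have hle1 : (∑ n, |psi ε (x n)| ^ p) ^ (1/p) ≤ S0 :=
          le_ciSup hBdd (⟨psi ε, hpsin ε⟩ : {ψ : H →L[ℝ] ℝ // ‖ψ‖ ≤ 1})
        have hnn : (0:ℝ) ≤ ∑ n, |psi ε (x n)| ^ p :=
          Finset.sum_nonneg fun n _ => Real.rpow_nonneg (abs_nonneg _) _
        have h := Real.rpow_le_rpow (Real.rpow_nonneg hnn _) hle1 hp0.le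
        rwa [← Real.rpow_mul hnn, one_div_mul_cancel hpne, Real.rpow_one] at h
      set N : ℝ := (Fintype.card (Fin m → Bool) : ℝ) with hNdef
      have hNpos : 0 < N := by
        rw [hNdef]
        exact_mod_cast Fintype.card_pos
      have hkh : ∀ n, ‖T (x n)‖ ≤
          Real.sqrt 3 * N⁻¹ * ∑ ε : Fin m → Bool, |⟪z ε, x n⟫| := by
        intro n
        have h := Stmt9.khintchine_l1 (c n)
        rw [← hc n, Real.sqrt_sq (norm_nonneg _)] at h
        refine h.trans (le_of_eq ?_)
        congr 1
        exact Finset.sum_congr rfl fun ε _ => by rw [hz ε n]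
      have hjensen : ∀ n, N⁻¹ * ∑ ε : Fin m → Bool, |⟪z ε, x n⟫| ≤
          (∑ ε : Fin m → Bool, N⁻¹ * |⟪z ε, x n⟫| ^ p) ^ (1/p) := by
        intro n
        have h := Real.arith_mean_le_rpow_mean Finset.univ (fun _ => N⁻¹)
          (fun ε => |⟪z ε, x n⟫|) (fun _ _ => inv_nonneg.2 hNpos.le) ?_
          (fun ε _ => abs_nonneg _) hp
        · rw [Finset.mul_sum]
          exact h
        · rw [Finset.sum_const, Finset.card_univ, nsmul_eq_mul, ← hNdef]
          exact mul_inv_cancel₀ (ne_of_gt hNpos)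
      have hTp : ∀ n, ‖T (x n)‖ ^ p ≤
          Real.sqrt 3 ^ p * ∑ ε : Fin m → Bool, N⁻¹ * |⟪z ε, x n⟫| ^ p := by
        intro n
        have h1 : ‖T (x n)‖ ≤ Real.sqrt 3 *
            (∑ ε : Fin m → Bool, N⁻¹ * |⟪z ε, x n⟫| ^ p) ^ (1/p) := by
          refine (hkh n).trans ?_
          rw [mul_assoc]
          exact mul_le_mul_of_nonneg_left (hjensen n) (Real.sqrt_nonneg 3)
        have hnn : (0:ℝ) ≤ ∑ ε : Fin m → Bool, N⁻¹ * |⟪z ε, x n⟫| ^ p :=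
          Finset.sum_nonneg fun ε _ =>
            mul_nonneg (inv_nonneg.2 hNpos.le) (Real.rpow_nonneg (abs_nonneg _) _)
        have h2 := Real.rpow_le_rpow (norm_nonneg _) h1 hp0.le
        rwa [Real.mul_rpow (Real.sqrt_nonneg 3) (Real.rpow_nonneg hnn _),
          ← Real.rpow_mul hnn, one_div_mul_cancel hpne, Real.rpow_one] at h2
      have hsum_swap : ∑ n, ∑ ε : Fin m → Bool, N⁻¹ * |⟪z ε, x n⟫| ^ p
          = ∑ ε : Fin m → Bool, N⁻¹ * ∑ n, |⟪z ε, x n⟫| ^ p := by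
        rw [Finset.sum_comm]
        exact Finset.sum_congr rfl fun ε _ => by rw [Finset.mul_sum]
      have hper : ∀ ε, ∑ n, |⟪z ε, x n⟫| ^ p ≤ M ^ p * S0 ^ p := by
        intro ε
        have h1 : ∀ n, |⟪z ε, x n⟫| ^ p = M ^ p * |psi ε (x n)| ^ p := by
          intro n
          rw [hpsieq ε n, abs_mul, abs_of_nonneg hMpos.le,
            Real.mul_rpow hMpos.le (abs_nonneg _)]
        rw [Finset.sum_congr rfl fun n _ => h1 n, ← Finset.mul_sum]
        exact mul_le_mul_of_nonneg_left (hle2 ε) (Real.rpow_nonneg hMpos.le _)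
      have htotal : ∑ n, ‖T (x n)‖ ^ p ≤ Real.sqrt 3 ^ p * (M ^ p * S0 ^ p) := by
        calc ∑ n, ‖T (x n)‖ ^ p
            ≤ ∑ n, Real.sqrt 3 ^ p * ∑ ε : Fin m → Bool, N⁻¹ * |⟪z ε, x n⟫| ^ p :=
              Finset.sum_le_sum fun n _ => hTp n
          _ = Real.sqrt 3 ^ p * ∑ n, ∑ ε : Fin m → Bool, N⁻¹ * |⟪z ε, x n⟫| ^ p := by
              rw [Finset.mul_sum]
          _ = Real.sqrt 3 ^ p * ∑ ε : Fin m → Bool, N⁻¹ * ∑ n, |⟪z ε, x n⟫| ^ p := by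
              rw [hsum_swap]
          _ ≤ Real.sqrt 3 ^ p * ∑ ε : Fin m → Bool, N⁻¹ * (M ^ p * S0 ^ p) := by
              refine mul_le_mul_of_nonneg_left ?_ (Real.rpow_nonneg (Real.sqrt_nonneg 3) _)
              exact Finset.sum_le_sum fun ε _ =>
                mul_le_mul_of_nonneg_left (hper ε) (inv_nonneg.2 hNpos.le)
          _ = Real.sqrt 3 ^ p * (M ^ p * S0 ^ p) := by
              rw [← Finset.sum_mul, Finset.sum_const, Finset.card_univ, nsmul_eq_mul,
                ← hNdef, mul_inv_cancel₀ (ne_of_gt hNpos), one_mul]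
      have hLT : ∑ n, ‖L (x n)‖ ^ p ≤ ‖k‖ ^ p * (Real.sqrt 3 ^ p * (M ^ p * S0 ^ p)) := by
        have h1 : ∀ n, ‖L (x n)‖ ^ p ≤ ‖k‖ ^ p * ‖T (x n)‖ ^ p := by
          intro n
          rw [← Real.mul_rpow (norm_nonneg k) (norm_nonneg _)]
          refine Real.rpow_le_rpow (norm_nonneg _) ?_ hp0.le
          rw [← hkT (x n)]
          exact k.le_opNorm _
        calc ∑ n, ‖L (x n)‖ ^ p ≤ ∑ n, ‖k‖ ^ p * ‖T (x n)‖ ^ p :=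
            Finset.sum_le_sum fun n _ => h1 n
          _ = ‖k‖ ^ p * ∑ n, ‖T (x n)‖ ^ p := by rw [Finset.mul_sum]
          _ ≤ ‖k‖ ^ p * (Real.sqrt 3 ^ p * (M ^ p * S0 ^ p)) :=
            mul_le_mul_of_nonneg_left htotal (Real.rpow_nonneg (norm_nonneg _) _)
      have hfinal : ∑ n, ‖L (x n)‖ ^ p ≤ (‖k‖ * Real.sqrt 3 * M * S0) ^ p := by
        refine hLT.trans (le_of_eq ?_)
        rw [Real.mul_rpow (mul_nonneg (mul_nonneg (norm_nonneg k) (Real.sqrt_nonneg 3)) hMpos.le) hS0,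
          Real.mul_rpow (mul_nonneg (norm_nonneg k) (Real.sqrt_nonneg 3)) hMpos.le,
          Real.mul_rpow (norm_nonneg k) (Real.sqrt_nonneg 3)]
        ring
      have hmono := Real.rpow_le_rpow (Finset.sum_nonneg fun n _ =>
        Real.rpow_nonneg (norm_nonneg _) _) hfinal (le_of_lt (by positivity : (0:ℝ) < 1/p))
      rw [← Real.rpow_mul (by positivity) , mul_one_div_cancel hpne, Real.rpow_one] at hmono
      refine hmono.trans ?_
      exact mul_le_mul_of_nonneg_right (le_max_right _ _) hS0
  -- conclude
  exact hgoal
end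

section
/- Let (λ_n) be a sequence of real numbers with λ_n² < 1/2 for all n and Σ_{n=1}^∞ λ_n² ln(n+1) < ∞, where (λ_n²) is sorted in descending order. For n ∈ ℕ and R ∈ ℝ define I_n(R) = (2π)^{−n/2} ∫_{{x ∈ ℝⁿ : Σ_{a=1}^n λ_a² x_a² ≥ R}} exp(−½ Σ_{a=1}^n (1 − λ_a²) x_a²) dⁿx. Then lim_{R→∞} sup_{n ∈ ℕ} I_n(R) = 0; in fact there exist constants ϱ, β > 0 such that for all R > 2/(ϱβ), sup_{n ∈ ℕ} I_n(R) ≤ exp(Σ_{a=1}^∞ λ_a²) · (ζ(ϱβR/2) − 1), where ζ denotes the Riemann zeta function. -/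
/-!
Chernoff bound: on `{∑ λ_a² x_a² ≥ R}` the integrand is at most
`e^{-R/2} exp (-½ ∑ (1 - 2λ_a²) x_a²)`, whose normalized Gaussian integral is
`∏ (1 - 2λ_a²)^{-1/2} = exp (-½ ∑ log (1 - 2λ_a²))`. Since `∑ λ_a² < ∞`, these logarithms are
summable, so `I_n(R) ≤ C e^{-R/2}` uniformly in `n`. The zeta form follows from `ζ(s) - 1 ≥ 2^{-s}`
once `ϱβ` is small enough that `2^{-ϱβR/2} ≥ C e^{-R/2}` beyond the threshold `R > 2/(ϱβ)`.
-/

open Filter Topology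

/-- The quantity
`I_n(R) = (2π)^{−n/2} ∫_{Σ λ_a² x_a² ≥ R} exp (−½ Σ (1 − λ_a²) x_a²) dx` on `ℝⁿ`. -/
noncomputable def gaussTailIntegral (lam : ℕ → ℝ) (n : ℕ) (R : ℝ) : ℝ :=
  (2 * Real.pi) ^ (-(n : ℝ) / 2) *
    ∫ x in {x : Fin n → ℝ | R ≤ ∑ a : Fin n, lam a.val ^ 2 * x a ^ 2},
      Real.exp (-(1 / 2) * ∑ a : Fin n, (1 - lam a.val ^ 2) * x a ^ 2)

/-- The Riemann zeta function `ζ(s) = ∑_{n≥1} n^{−s}` for real `s`. -/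
noncomputable def realZeta (s : ℝ) : ℝ := ∑' n : ℕ, ((n : ℝ) + 1) ^ (-s)

open MeasureTheory Real Finset

section Gaussian

variable {ι : Type*} [Fintype ι]

lemma exp_neg_half_weighted_sum_sq_eq_prod (d x : ι → ℝ) :
    exp (-(1 / 2) * ∑ i, d i * x i ^ 2) = ∏ i, exp (-(d i / 2) * x i ^ 2) := by
  rw [← exp_sum, mul_sum]
  exact congrArg exp (sum_congr rfl fun i _ => by ring)

lemma integrable_exp_neg_half_weighted_sum_sq {d : ι → ℝ} (hd : ∀ i, 0 < d i) :
    Integrable fun x : ι → ℝ => exp (-(1 / 2) * ∑ i, d i * x i ^ 2) := by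
  simp_rw [exp_neg_half_weighted_sum_sq_eq_prod]
  exact Integrable.fintype_prod fun i => integrable_exp_neg_mul_sq (half_pos (hd i))

lemma normalized_integral_exp_neg_half_weighted_sum_sq (d : ι → ℝ) :
    (2 * π) ^ (-(Fintype.card ι : ℝ) / 2) * ∫ x : ι → ℝ, exp (-(1 / 2) * ∑ i, d i * x i ^ 2) =
      ∏ i, (√(d i))⁻¹ := by
  have h2π : 0 < 2 * π := by positivity
  have hnorm : (2 * π) ^ (-(Fintype.card ι : ℝ) / 2) = ∏ _i : ι, (√(2 * π))⁻¹ := by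
    rw [prod_const, card_univ, sqrt_eq_rpow, ← rpow_neg h2π.le, ← rpow_mul_natCast h2π.le]
    ring_nf
  simp_rw [exp_neg_half_weighted_sum_sq_eq_prod]
  rw [integral_fintype_prod_volume_eq_prod (fun i (y : ℝ) => exp (-(d i / 2) * y ^ 2)), hnorm,
    ← prod_mul_distrib]
  refine prod_congr rfl fun i _ => ?_
  rw [integral_gaussian, div_div_eq_mul_div, mul_comm π, sqrt_div h2π.le, div_eq_mul_inv,
    ← mul_assoc, inv_mul_cancel₀ (sqrt_pos.2 h2π).ne', one_mul]

lemma setIntegral_exp_neg_half_weighted_sum_sq_le {d w : ι → ℝ} (hwd : ∀ i, w i < d i) (R : ℝ) :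
    ∫ x in {x : ι → ℝ | R ≤ ∑ i, w i * x i ^ 2}, exp (-(1 / 2) * ∑ i, d i * x i ^ 2) ≤
      exp (-(R / 2)) * ∫ x : ι → ℝ, exp (-(1 / 2) * ∑ i, (d i - w i) * x i ^ 2) := by
  have hg := (integrable_exp_neg_half_weighted_sum_sq fun i => sub_pos.2 (hwd i)).const_mul
    (exp (-(R / 2)))
  rw [← integral_const_mul]
  refine (integral_mono_of_nonneg (ae_of_all _ fun x => (exp_pos _).le) hg.integrableOn ?_).trans
    (setIntegral_le_integral hg (ae_of_all _ fun x => by positivity))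
  refine ae_restrict_of_forall_mem (measurableSet_le (by fun_prop) (by fun_prop)) fun x hx => ?_
  have hsplit : ∑ i, d i * x i ^ 2 = ∑ i, (d i - w i) * x i ^ 2 + ∑ i, w i * x i ^ 2 := by
    rw [← sum_add_distrib]
    exact sum_congr rfl fun i _ => by ring
  beta_reduce
  rw [← exp_add, hsplit]
  exact exp_le_exp.2 (by linarith [show R ≤ ∑ i, w i * x i ^ 2 from hx])

end Gaussian

lemma gaussTailIntegral_le (lam : ℕ → ℝ) (hhalf : ∀ n, lam n ^ 2 < 1 / 2) (n : ℕ) (R : ℝ) :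
    gaussTailIntegral lam n R ≤
      exp (-(R + ∑ a ∈ range n, log (1 - 2 * lam a ^ 2)) / 2) := by
  have hpos : ∀ a, 0 < 1 - 2 * lam a ^ 2 := fun a => by linarith [hhalf a]
  have htail := setIntegral_exp_neg_half_weighted_sum_sq_le
    (d := fun a : Fin n => 1 - lam a ^ 2) (w := fun a => lam a ^ 2)
    (fun a => by linarith [hpos a]) R
  have hnorm := normalized_integral_exp_neg_half_weighted_sum_sq
    (fun a : Fin n => 1 - 2 * lam a ^ 2)
  simp only [sub_sub, ← two_mul, Fintype.card_fin] at htail hnorm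
  calc gaussTailIntegral lam n R
      ≤ (2 * π) ^ (-(n : ℝ) / 2) * (exp (-(R / 2)) *
          ∫ x : Fin n → ℝ, exp (-(1 / 2) * ∑ a : Fin n, (1 - 2 * lam a ^ 2) * x a ^ 2)) :=
        mul_le_mul_of_nonneg_left htail (by positivity)
    _ = exp (-(R / 2)) * ∏ a : Fin n, (√(1 - 2 * lam a ^ 2))⁻¹ := by
        rw [mul_left_comm, hnorm]
    _ = exp (-(R + ∑ a ∈ range n, log (1 - 2 * lam a ^ 2)) / 2) := by
        have hsqrt (a : ℕ) : (√(1 - 2 * lam a ^ 2))⁻¹ = exp (-log (1 - 2 * lam a ^ 2) / 2) := by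
          rw [sqrt_eq_rpow, ← rpow_neg (hpos a).le, rpow_def_of_pos (hpos a)]
          congr 1; ring
        rw [Fin.prod_univ_eq_prod_range (fun a => (√(1 - 2 * lam a ^ 2))⁻¹),
          prod_congr rfl fun a _ => hsqrt a, ← exp_sum, ← exp_add, ← sum_div, sum_neg_distrib]
        congr 1; ring

lemma summable_of_summable_mul_log_add_two {f : ℕ → ℝ} (hf : ∀ n, 0 ≤ f n)
    (h : Summable fun n : ℕ => f n * log ((n : ℝ) + 2)) : Summable f := by
  refine (summable_mul_right_iff (log_pos one_lt_two).ne').1 (h.of_nonneg_of_le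
    (fun n => mul_nonneg (hf n) (log_pos one_lt_two).le) fun n => ?_)
  exact mul_le_mul_of_nonneg_left (log_le_log two_pos (by linarith [n.cast_nonneg (α := ℝ)])) (hf n)

lemma gaussTailIntegral_le_of_summable (lam : ℕ → ℝ) (hhalf : ∀ n, lam n ^ 2 < 1 / 2)
    (hsum : Summable fun n => lam n ^ 2) (n : ℕ) (R : ℝ) :
    gaussTailIntegral lam n R ≤ exp (-(R + ∑' a, log (1 - 2 * lam a ^ 2)) / 2) := by
  have hlog : Summable fun a => -log (1 - 2 * lam a ^ 2) := by
    refine (Real.summable_log_one_add_of_summable (hsum.mul_left (-2))).neg.congr fun a => ?_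
    ring_nf
  refine (gaussTailIntegral_le lam hhalf n R).trans (exp_le_exp.2 ?_)
  have := hlog.sum_le_tsum (range n) fun a _ =>
    neg_nonneg.2 (log_nonpos (by linarith [hhalf a]) (by nlinarith [sq_nonneg (lam a)]))
  rw [sum_neg_distrib, tsum_neg] at this
  linarith

lemma two_rpow_neg_le_realZeta_sub_one {s : ℝ} (hs : 1 < s) : (2 : ℝ) ^ (-s) ≤ realZeta s - 1 := by
  have hsum : Summable fun n : ℕ => ((n : ℝ) + 1) ^ (-s) := by
    simpa using (summable_nat_add_iff 1).2 (Real.summable_nat_rpow.2 (by linarith))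
  have := hsum.sum_le_tsum {0, 1} fun n _ => by positivity
  rw [sum_pair zero_ne_one] at this
  norm_num at this
  unfold realZeta
  linarith

/-- `K = 2 log 2 - L` is chosen so that `K⁻¹ log 2 ≤ 1/2` and `R > 2K ≥ -2L`. -/
lemma exp_neg_half_le_realZeta_sub_one {L R : ℝ} (hL : L ≤ 0) (hR : 2 * (2 * log 2 - L) < R) :
    exp (-(R + L) / 2) ≤ realZeta ((2 * log 2 - L)⁻¹ * R / 2) - 1 := by
  set K := 2 * log 2 - L
  have hK : 0 < K := by linarith [log_pos one_lt_two]
  have hs : 1 < K⁻¹ * R / 2 := by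
    rw [← div_eq_inv_mul, div_div, lt_div_iff₀ (by positivity)]; linarith
  have hslog : K⁻¹ * R / 2 * log 2 ≤ (R + L) / 2 := by
    rw [show K⁻¹ * R / 2 * log 2 = R * log 2 / (2 * K) by field_simp, div_le_iff₀ (by positivity)]
    nlinarith
  calc exp (-(R + L) / 2) ≤ 2 ^ (-(K⁻¹ * R / 2)) := by
        rw [rpow_def_of_pos two_pos]
        exact exp_le_exp.2 (by linarith)
    _ ≤ realZeta (K⁻¹ * R / 2) - 1 := two_rpow_neg_le_realZeta_sub_one hs

theorem statement_17_general (lam : ℕ → ℝ)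
    (hhalf : ∀ n, lam n ^ 2 < 1 / 2)
    (hlogsum : Summable fun n : ℕ => lam n ^ 2 * Real.log ((n : ℝ) + 2)) :
    (∀ ε : ℝ, 0 < ε → ∃ R₀ : ℝ, ∀ R ≥ R₀, ∀ n : ℕ, gaussTailIntegral lam n R ≤ ε) ∧
    ∃ ϱ : ℝ, 0 < ϱ ∧ ∃ β : ℝ, 0 < β ∧ ∀ R : ℝ, 2 / (ϱ * β) < R → ∀ n : ℕ,
      gaussTailIntegral lam n R ≤
        Real.exp (∑' a : ℕ, lam a ^ 2) * (realZeta (ϱ * β * R / 2) - 1) := by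
  set L := ∑' a, log (1 - 2 * lam a ^ 2)
  have hL : L ≤ 0 := tsum_nonpos fun a =>
    log_nonpos (by linarith [hhalf a]) (by nlinarith [sq_nonneg (lam a)])
  have hbound := gaussTailIntegral_le_of_summable lam hhalf
    (summable_of_summable_mul_log_add_two (fun n => sq_nonneg _) hlogsum)
  have hK : 0 < 2 * log 2 - L := by linarith [log_pos one_lt_two]
  refine ⟨fun ε hε => ⟨-L - 2 * log ε, fun R hR n => ?_⟩,
    (2 * log 2 - L)⁻¹, inv_pos.2 hK, 1, one_pos, fun R hR n => ?_⟩
  · calc gaussTailIntegral lam n R ≤ exp (-(R + L) / 2) := hbound n R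
      _ ≤ exp (log ε) := exp_le_exp.2 (by linarith)
      _ = ε := exp_log hε
  · rw [mul_one, div_inv_eq_mul] at hR
    have hzeta := exp_neg_half_le_realZeta_sub_one hL hR
    rw [mul_one]
    calc gaussTailIntegral lam n R ≤ exp (-(R + L) / 2) := hbound n R
      _ ≤ realZeta ((2 * log 2 - L)⁻¹ * R / 2) - 1 := hzeta
      _ ≤ exp (∑' a, lam a ^ 2) * (realZeta ((2 * log 2 - L)⁻¹ * R / 2) - 1) :=
        le_mul_of_one_le_left ((exp_pos _).le.trans hzeta)
          (one_le_exp (tsum_nonneg fun a => sq_nonneg _))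

/-- If `(λ_n)` satisfies `λ_n² < 1/2`, is sorted descendingly and
`∑ λ_n² log (n+1) < ∞`, then `sup_n I_n(R) → 0` as `R → ∞`; more precisely there are
`ϱ, β > 0` with `sup_n I_n(R) ≤ exp (∑ λ_a²) (ζ(ϱβR/2) − 1)` for all `R > 2/(ϱβ)`. -/
theorem statement_17 (lam : ℕ → ℝ)
    (hhalf : ∀ n, lam n ^ 2 < 1 / 2)
    (hdec : Antitone fun n => lam n ^ 2)
    (hlogsum : Summable fun n : ℕ => lam n ^ 2 * Real.log ((n : ℝ) + 2)) :
    (∀ ε : ℝ, 0 < ε → ∃ R₀ : ℝ, ∀ R ≥ R₀, ∀ n : ℕ, gaussTailIntegral lam n R ≤ ε) ∧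
    ∃ ϱ : ℝ, 0 < ϱ ∧ ∃ β : ℝ, 0 < β ∧ ∀ R : ℝ, 2 / (ϱ * β) < R → ∀ n : ℕ,
      gaussTailIntegral lam n R ≤
        Real.exp (∑' a : ℕ, lam a ^ 2) * (realZeta (ϱ * β * R / 2) - 1) :=
  statement_17_general lam hhalf hlogsum
end
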